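/- arXiv:2308.12016 — 7 statements merged into one kernel-verified Lean document; each statement's English description precedes it below -/
import Mathlib

section
/- For real numbers γ > 0, C > 0 and z ∈ ℝ, define h : ℝ → ℝ by h(v) = C·H(v) + (1/(2γ))·(v − z)², where H(v) = 1 if v > 0 and H(v) = 0 if v ≤ 0. Then: (i) if 0 < z ≤ √(2γC), the function h attains its global minimum over ℝ at v = 0; (ii) if z > √(2γC) or z ≤ 0, the function h attains its global minimum over ℝ at v = z. (Closed-form evaluation of the scalar L_{0/1} proximal operator prox_{γC‖(·)₊‖₀}.) -/
/-!
On `v ≤ 0` the objective is the bare quadratic, minimised at `min z 0`; on `v > 0` it is at least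
`C`, with equality at `v = z` when `z > 0`. So for `z > 0` the minimiser is `0` or `z` according
as `z² / (2γ) ≤ C` or not, i.e. as `z ≤ √(2γC)` or not, and for `z ≤ 0` it is `z`.
-/

open Real

noncomputable def l01Objective (C a z v : ℝ) : ℝ :=
  C * (if 0 < v then 1 else 0) + a * (v - z) ^ 2

namespace l01Objective

variable {C a z v : ℝ}

lemma of_pos (hv : 0 < v) : l01Objective C a z v = C + a * (v - z) ^ 2 := by
  simp [l01Objective, hv]

lemma of_nonpos (hv : v ≤ 0) : l01Objective C a z v = a * (v - z) ^ 2 := by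
  simp [l01Objective, not_lt.2 hv]

lemma sq_le_sq_sub_of_nonpos (hz : 0 ≤ z) (hv : v ≤ 0) : z ^ 2 ≤ (v - z) ^ 2 := by
  nlinarith

lemma zero_le_of_mul_sq_le (ha : 0 ≤ a) (hz : 0 ≤ z) (hzC : a * z ^ 2 ≤ C) (v : ℝ) :
    l01Objective C a z 0 ≤ l01Objective C a z v := by
  rw [of_nonpos le_rfl, zero_sub, neg_sq]
  rcases lt_or_ge 0 v with hv | hv
  · rw [of_pos hv]
    nlinarith [mul_nonneg ha (sq_nonneg (v - z))]
  · rw [of_nonpos hv]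
    exact mul_le_mul_of_nonneg_left (sq_le_sq_sub_of_nonpos hz hv) ha

lemma self_le_of_le_mul_sq (ha : 0 ≤ a) (hz : 0 < z) (hzC : C ≤ a * z ^ 2) (v : ℝ) :
    l01Objective C a z z ≤ l01Objective C a z v := by
  rw [of_pos hz, sub_self]
  rcases lt_or_ge 0 v with hv | hv
  · rw [of_pos hv]
    nlinarith [mul_nonneg ha (sq_nonneg (v - z))]
  · rw [of_nonpos hv]
    nlinarith [mul_le_mul_of_nonneg_left (sq_le_sq_sub_of_nonpos hz.le hv) ha]

lemma self_le_of_nonpos (ha : 0 ≤ a) (hC : 0 ≤ C) (hz : z ≤ 0) (v : ℝ) :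
    l01Objective C a z z ≤ l01Objective C a z v := by
  rw [of_nonpos hz, sub_self]
  rcases lt_or_ge 0 v with hv | hv
  · rw [of_pos hv]
    nlinarith [mul_nonneg ha (sq_nonneg (v - z))]
  · rw [of_nonpos hv]
    nlinarith [mul_nonneg ha (sq_nonneg (v - z))]

end l01Objective

lemma le_sqrt_two_mul_iff {γ C z : ℝ} (hγ : 0 < γ) (hz : 0 < z) :
    z ≤ √(2 * γ * C) ↔ 1 / (2 * γ) * z ^ 2 ≤ C := by
  rw [Real.le_sqrt' hz, div_mul_eq_mul_div, one_mul, div_le_iff₀ (by positivity), mul_comm C]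

/-- Closed-form evaluation of the scalar L_{0/1} proximal operator. -/
theorem stmt_0 (γ C z : ℝ) (hγ : 0 < γ) (hC : 0 < C)
    (h : ℝ → ℝ)
    (hh : ∀ v : ℝ, h v = C * (if 0 < v then (1 : ℝ) else 0) + (1 / (2 * γ)) * (v - z) ^ 2) :
    ((0 < z ∧ z ≤ Real.sqrt (2 * γ * C)) → ∀ v : ℝ, h 0 ≤ h v) ∧
    ((Real.sqrt (2 * γ * C) < z ∨ z ≤ 0) → ∀ v : ℝ, h z ≤ h v) := by
  obtain rfl : h = l01Objective C (1 / (2 * γ)) z := funext hh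
  have ha : 0 ≤ 1 / (2 * γ) := by positivity
  refine ⟨fun ⟨hz, hzC⟩ => ?_, fun hcase => ?_⟩
  · exact l01Objective.zero_le_of_mul_sq_le ha hz.le ((le_sqrt_two_mul_iff hγ hz).1 hzC)
  rcases hcase with hzC | hz
  · have hz : 0 < z := (Real.sqrt_nonneg _).trans_lt hzC
    have hCz : C < 1 / (2 * γ) * z ^ 2 :=
      not_le.1 fun h' => hzC.not_ge ((le_sqrt_two_mul_iff hγ hz).2 h')
    exact l01Objective.self_le_of_le_mul_sq ha hz hCz.le
  · exact l01Objective.self_le_of_nonpos ha hC.le hz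
end

section
/- The function J : ℝ^m × ℝ^L × ℝ → ℝ defined by J(w, d, b) = (1/2) wᵀ 𝒦(d) w + C ‖(1 − 𝒜(d)w − b y)₊‖₀ is lower semicontinuous on ℝ^m × ℝ^L × ℝ. -/
open Matrix

/-- `‖v₊‖₀`: the number of strictly positive components of `v`, as a real number. -/
noncomputable def l0pos {m : ℕ} (v : Fin m → ℝ) : ℝ :=
  ((Finset.univ.filter (fun i => 0 < v i)).card : ℝ)

/-- `C‖v₊‖₀` is a sum of indicators of the open half-spaces `{v | 0 < v i}`, each with value `C ≥ 0`. -/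
lemma lowerSemicontinuous_const_mul_l0pos {m : ℕ} {C : ℝ} (hC : 0 ≤ C) :
    LowerSemicontinuous fun v : Fin m → ℝ => C * l0pos v := by
  have hsum : (fun v : Fin m → ℝ => C * l0pos v) =
      fun v => ∑ i, Set.indicator {v : Fin m → ℝ | 0 < v i} (fun _ => C) v := by
    funext v
    simp only [l0pos, Set.indicator_apply, Set.mem_ofPred_eq, Finset.sum_ite,
      Finset.sum_const, smul_zero, add_zero, nsmul_eq_mul, mul_comm]
  rw [hsum]
  exact lowerSemicontinuous_sum fun i _ =>
    (isOpen_lt continuous_const (continuous_apply i)).lowerSemicontinuous_indicator hC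

lemma continuous_sum_smul_matrix {ι m n : Type*} [Fintype ι] (K : ι → Matrix m n ℝ) :
    Continuous fun d : ι → ℝ => ∑ ℓ, d ℓ • K ℓ :=
  continuous_finsetSum _ fun ℓ _ => (continuous_apply ℓ).smul continuous_const

theorem stmt_3_general (m L : ℕ)
    (y : Fin m → ℝ)
    (K : Fin L → Matrix (Fin m) (Fin m) ℝ)
    (C : ℝ) (hC : 0 < C)
    (J : (Fin m → ℝ) × (Fin L → ℝ) × ℝ → ℝ)
    (hJ : ∀ (w : Fin m → ℝ) (d : Fin L → ℝ) (b : ℝ),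
      J (w, d, b) =
        (1 / 2) * (w ⬝ᵥ (∑ ℓ, d ℓ • K ℓ).mulVec w) +
        C * l0pos (1 - (Matrix.diagonal y * ∑ ℓ, d ℓ • K ℓ).mulVec w - b • y)) :
    LowerSemicontinuous J := by
  have hJ' : J = fun x =>
      (1 / 2) * (x.1 ⬝ᵥ (∑ ℓ, x.2.1 ℓ • K ℓ).mulVec x.1) +
      C * l0pos (1 - (Matrix.diagonal y * ∑ ℓ, x.2.1 ℓ • K ℓ).mulVec x.1 - x.2.2 • y) := by
    funext ⟨w, d, b⟩
    exact hJ w d b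
  have hKd : Continuous fun x : (Fin m → ℝ) × (Fin L → ℝ) × ℝ => ∑ ℓ, x.2.1 ℓ • K ℓ :=
    (continuous_sum_smul_matrix K).comp (continuous_fst.comp continuous_snd)
  have hquad : Continuous fun x : (Fin m → ℝ) × (Fin L → ℝ) × ℝ =>
      (1 / 2) * (x.1 ⬝ᵥ (∑ ℓ, x.2.1 ℓ • K ℓ).mulVec x.1) :=
    continuous_const.mul (continuous_fst.dotProduct (hKd.matrix_mulVec continuous_fst))
  have hmargin : Continuous fun x : (Fin m → ℝ) × (Fin L → ℝ) × ℝ =>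
      1 - (Matrix.diagonal y * ∑ ℓ, x.2.1 ℓ • K ℓ).mulVec x.1 - x.2.2 • y :=
    (continuous_const.sub ((continuous_const.mul hKd).matrix_mulVec continuous_fst)).sub
      ((continuous_snd.comp continuous_snd).smul continuous_const)
  rw [hJ']
  exact hquad.lowerSemicontinuous.add
    ((lowerSemicontinuous_const_mul_l0pos hC.le).comp hmargin)

/-- The objective `J(w,d,b) = (1/2) wᵀ𝒦(d)w + C‖(1 − 𝒜(d)w − b y)₊‖₀` is
lower semicontinuous on `ℝ^m × ℝ^L × ℝ`. -/
theorem stmt_3 (m L : ℕ) (hm : 1 ≤ m) (hL : 1 ≤ L)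
    (y : Fin m → ℝ) (hy : ∀ i, y i = 1 ∨ y i = -1)
    (K : Fin L → Matrix (Fin m) (Fin m) ℝ) (hK : ∀ ℓ, (K ℓ).PosDef)
    (C : ℝ) (hC : 0 < C)
    (J : (Fin m → ℝ) × (Fin L → ℝ) × ℝ → ℝ)
    (hJ : ∀ (w : Fin m → ℝ) (d : Fin L → ℝ) (b : ℝ),
      J (w, d, b) =
        (1 / 2) * (w ⬝ᵥ (∑ ℓ, d ℓ • K ℓ).mulVec w) +
        C * l0pos (1 - (Matrix.diagonal y * ∑ ℓ, d ℓ • K ℓ).mulVec w - b • y)) :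
    LowerSemicontinuous J :=
  stmt_3_general m L y K C hC J hJ
end

section
/- Let M > 0. The sublevel set S = {(w, d, b) ∈ ℝ^m × Δ × [−M, M] : J(w, d, b) ≤ C·m} is a nonempty compact subset of ℝ^m × ℝ^L × ℝ. -/
/-!
The counting term `C ‖(·)₊‖₀` is a nonnegative sum of indicators of open sets, hence lower
semicontinuous, so `J` is lower semicontinuous and its sublevel sets are closed. Each `K_ℓ` is
coercive on the compact unit sphere, and taking the smallest of these constants gives
`wᵀ 𝒦(d) w ≥ c ‖w‖²` uniformly for `d ∈ Δ`. Hence `J ≤ C m` forces `‖w‖² ≤ 2 C m / c`, and `S` is a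
closed subset of a compact box. The point `(0, e₁, 0)` has `J = C m`.
-/

open Matrix

open Set Metric

theorem l0pos_nonneg {m : ℕ} (v : Fin m → ℝ) : 0 ≤ l0pos v := by
  unfold l0pos; positivity

theorem l0pos_one (m : ℕ) : l0pos (1 : Fin m → ℝ) = m := by
  simp [l0pos]

theorem lowerSemicontinuous_l0pos (m : ℕ) : LowerSemicontinuous (l0pos (m := m)) := by
  have hsum : l0pos (m := m) =
      fun v => ∑ i, {v : Fin m → ℝ | 0 < v i}.indicator (fun _ => 1) v := by
    ext v
    rw [l0pos, Finset.natCast_card_filter]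
    simp only [indicator_apply, mem_ofPred_eq]
  rw [hsum]
  exact lowerSemicontinuous_sum fun i _ =>
    (isOpen_lt continuous_const (continuous_apply i)).lowerSemicontinuous_indicator zero_le_one

theorem lowerSemicontinuous_add_mul_l0pos {X : Type*} [TopologicalSpace X] {m : ℕ}
    {q : X → ℝ} {F : X → Fin m → ℝ} (hq : Continuous q) (hF : Continuous F) {C : ℝ}
    (hC : 0 ≤ C) : LowerSemicontinuous fun x => q x + C * l0pos (F x) :=
  hq.lowerSemicontinuous.add <| (continuous_const_mul C).comp_lowerSemicontinuous
    ((lowerSemicontinuous_l0pos m).comp hF) (monotone_mul_left_of_nonneg hC)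

theorem Matrix.PosDef.exists_pos_mul_norm_sq_le {n : Type*} [Fintype n] {A : Matrix n n ℝ}
    (hA : A.PosDef) : ∃ c > 0, ∀ w : n → ℝ, c * ‖w‖ ^ 2 ≤ w ⬝ᵥ A *ᵥ w := by
  rcases isEmpty_or_nonempty n with hn | hn
  · exact ⟨1, one_pos, fun w => by simp [Subsingleton.elim w 0]⟩
  have hQ : Continuous fun w : n → ℝ => w ⬝ᵥ A *ᵥ w := by fun_prop
  obtain ⟨u, hu, hmin⟩ := (isCompact_sphere (0 : n → ℝ) 1).exists_isMinOn
    (NormedSpace.sphere_nonempty.2 zero_le_one) hQ.continuousOn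
  have hu0 : u ≠ 0 := ne_zero_of_mem_unit_sphere ⟨u, hu⟩
  refine ⟨u ⬝ᵥ A *ᵥ u, by simpa using hA.dotProduct_mulVec_pos hu0, fun w => ?_⟩
  rcases eq_or_ne w 0 with rfl | hw
  · simp
  have hw' : 0 < ‖w‖ := norm_pos_iff.2 hw
  have hsphere : ‖w‖⁻¹ • w ∈ sphere (0 : n → ℝ) 1 := by
    simp [norm_smul, hw'.ne']
  have hscale : w ⬝ᵥ A *ᵥ w = ‖w‖ ^ 2 * ((‖w‖⁻¹ • w) ⬝ᵥ A *ᵥ (‖w‖⁻¹ • w)) := by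
    simp only [mulVec_smul, smul_dotProduct, dotProduct_smul, smul_eq_mul]
    field_simp
  rw [hscale, mul_comm]
  exact mul_le_mul_of_nonneg_left (hmin hsphere) (sq_nonneg _)

theorem dotProduct_sum_smul_mulVec {ι n : Type*} [Fintype ι] [Fintype n]
    (d : ι → ℝ) (K : ι → Matrix n n ℝ) (w : n → ℝ) :
    w ⬝ᵥ (∑ i, d i • K i) *ᵥ w = ∑ i, d i * (w ⬝ᵥ K i *ᵥ w) := by
  simp [sum_mulVec, dotProduct_sum, smul_mulVec]

theorem exists_pos_mul_norm_sq_le_sum_smul {ι n : Type*} [Fintype ι] [Nonempty ι] [Fintype n]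
    {K : ι → Matrix n n ℝ} (hK : ∀ i, (K i).PosDef) :
    ∃ c > 0, ∀ d ∈ stdSimplex ℝ ι, ∀ w : n → ℝ,
      c * ‖w‖ ^ 2 ≤ w ⬝ᵥ (∑ i, d i • K i) *ᵥ w := by
  choose c hc hcK using fun i => (hK i).exists_pos_mul_norm_sq_le
  obtain ⟨i₀, hi₀⟩ := Finite.exists_min c
  refine ⟨c i₀, hc i₀, fun d ⟨hd0, hd1⟩ w => ?_⟩
  calc c i₀ * ‖w‖ ^ 2 = ∑ i, d i * (c i₀ * ‖w‖ ^ 2) := by rw [← Finset.sum_mul, hd1, one_mul]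
    _ ≤ ∑ i, d i * (w ⬝ᵥ K i *ᵥ w) := by
        gcongr with i
        · exact hd0 i
        · exact (mul_le_mul_of_nonneg_right (hi₀ i) (sq_nonneg _)).trans (hcK i w)
    _ = w ⬝ᵥ (∑ i, d i • K i) *ᵥ w := (dotProduct_sum_smul_mulVec d K w).symm

theorem stmt_4_general (m L : ℕ) (hL : 1 ≤ L)
    (y : Fin m → ℝ)
    (K : Fin L → Matrix (Fin m) (Fin m) ℝ) (hK : ∀ ℓ, (K ℓ).PosDef)
    (C : ℝ) (hC : 0 < C)
    (J : (Fin m → ℝ) × (Fin L → ℝ) × ℝ → ℝ)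
    (hJ : ∀ (w : Fin m → ℝ) (d : Fin L → ℝ) (b : ℝ),
      J (w, d, b) =
        (1 / 2) * (w ⬝ᵥ (∑ ℓ, d ℓ • K ℓ).mulVec w) +
        C * l0pos (1 - (Matrix.diagonal y * ∑ ℓ, d ℓ • K ℓ).mulVec w - b • y))
    (M : ℝ) (hM : 0 < M)
    (S : Set ((Fin m → ℝ) × (Fin L → ℝ) × ℝ))
    (hS : S = {p | (∀ ℓ, 0 ≤ p.2.1 ℓ) ∧ (∑ ℓ, p.2.1 ℓ) = 1 ∧
        p.2.2 ∈ Set.Icc (-M) M ∧ J p ≤ C * m}) :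
    S.Nonempty ∧ IsCompact S := by
  have : Nonempty (Fin L) := ⟨⟨0, hL⟩⟩
  obtain ⟨c, hc, hcoer⟩ := exists_pos_mul_norm_sq_le_sum_smul hK
  have hJlsc : LowerSemicontinuous J := by
    rw [show J = _ from funext fun p : (Fin m → ℝ) × (Fin L → ℝ) × ℝ => hJ p.1 p.2.1 p.2.2]
    exact lowerSemicontinuous_add_mul_l0pos (by fun_prop) (by fun_prop) hC.le
  have hSB : S = closedBall 0 √(2 * C * m / c) ×ˢ stdSimplex ℝ (Fin L) ×ˢ Icc (-M) M ∩
      J ⁻¹' Iic (C * m) := by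
    ext ⟨w, d, b⟩
    simp only [hS, mem_ofPred_eq, mem_inter_iff, mem_prod, mem_preimage, mem_Iic]
    constructor
    · rintro ⟨hd0, hd1, hb, hJp⟩
      refine ⟨⟨?_, ⟨hd0, hd1⟩, hb⟩, hJp⟩
      have hquad : w ⬝ᵥ (∑ ℓ, d ℓ • K ℓ) *ᵥ w ≤ 2 * C * m := by
        rw [hJ] at hJp
        have := mul_nonneg hC.le (l0pos_nonneg (1 - (diagonal y * ∑ ℓ, d ℓ • K ℓ) *ᵥ w - b • y))
        linarith
      rw [mem_closedBall, dist_zero_right, Real.le_sqrt (norm_nonneg _) (by positivity),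
        le_div_iff₀ hc, mul_comm]
      exact (hcoer d ⟨hd0, hd1⟩ w).trans hquad
    · rintro ⟨⟨-, ⟨hd0, hd1⟩, hb⟩, hJp⟩
      exact ⟨hd0, hd1, hb, hJp⟩
  refine ⟨⟨(0, Pi.single ⟨0, hL⟩ 1, 0), ?_⟩, ?_⟩
  · rw [hS]
    refine ⟨(single_mem_stdSimplex ℝ _).1, (single_mem_stdSimplex ℝ _).2, ⟨by linarith, hM.le⟩, ?_⟩
    simp [hJ, l0pos_one]
  · rw [hSB]
    exact ((isCompact_closedBall _ _).prod ((isCompact_stdSimplex ℝ _).prod isCompact_Icc))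
      |>.inter_right (hJlsc.isClosed_preimage _)

/-- The sublevel set `S = {(w,d,b) ∈ ℝ^m × Δ × [−M,M] : J(w,d,b) ≤ C·m}` is a nonempty
compact subset of `ℝ^m × ℝ^L × ℝ`. -/
theorem stmt_4 (m L : ℕ) (hm : 1 ≤ m) (hL : 1 ≤ L)
    (y : Fin m → ℝ) (hy : ∀ i, y i = 1 ∨ y i = -1)
    (K : Fin L → Matrix (Fin m) (Fin m) ℝ) (hK : ∀ ℓ, (K ℓ).PosDef)
    (C : ℝ) (hC : 0 < C)
    (J : (Fin m → ℝ) × (Fin L → ℝ) × ℝ → ℝ)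
    (hJ : ∀ (w : Fin m → ℝ) (d : Fin L → ℝ) (b : ℝ),
      J (w, d, b) =
        (1 / 2) * (w ⬝ᵥ (∑ ℓ, d ℓ • K ℓ).mulVec w) +
        C * l0pos (1 - (Matrix.diagonal y * ∑ ℓ, d ℓ • K ℓ).mulVec w - b • y))
    (M : ℝ) (hM : 0 < M)
    (S : Set ((Fin m → ℝ) × (Fin L → ℝ) × ℝ))
    (hS : S = {p | (∀ ℓ, 0 ≤ p.2.1 ℓ) ∧ (∑ ℓ, p.2.1 ℓ) = 1 ∧
        p.2.2 ∈ Set.Icc (-M) M ∧ J p ≤ C * m}) :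
    S.Nonempty ∧ IsCompact S :=
  stmt_4_general m L hL y K hK C hC J hJ M hM S hS
end

section
/- (Theorem 4, part 1: global minimizers are P-stationary.) Let C₁ = min{λ_min(𝒦(d)) : d ∈ Δ} > 0. Suppose (w*, d*, b*) is a global minimizer of J(w, d, b) over (w, d, b) ∈ ℝ^m × Δ × ℝ, and set u* = 1 − 𝒜(d*) w* − b* y. Then for every γ with 0 < γ < C₁, the quadruple (w*, d*, b*, u*) is a P-stationary point with parameter γ. -/
/-!
Write `u = 1 - 𝒜(d) w - b y` for the slack. The matrices `𝒦(d)`, `d ∈ Δ`, are uniformly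
coercive with constant `C₁`, so each is invertible and satisfies `c · xᵀ𝒦x ≤ ‖𝒦x‖²` for `c ≤ C₁`.
Replacing `(w, b)` by `(w + q, b + t)` changes `u` by `-D_y 𝒦(d) q - t y`. Taking `𝒦(d) q = t 1`
leaves `u` unchanged, and the resulting quadratic growth in `t` forces `∑ wᵢ = 0`, i.e.
`yᵀλ = 0` for `λ = -D_y w`. Taking `𝒦(d) q = D_y (u - v)` turns the slack into an arbitrary `v`,
and the bound `½ qᵀ𝒦q ≤ ‖u - v‖² / (2γ)` for `γ < C₁` yields the proximal inequality.
Finally, moving weight `t` from kernel `j` to kernel `i`, and re-solving for `w` so that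
`𝒦(d) w` is kept, changes the objective by `-t (wᵀKᵢw - wᵀKⱼw) + O(t²)`. Hence `wᵀKⱼw` is maximal
whenever `dⱼ > 0`, which produces the multipliers `θ` and `α`.
-/

open Matrix

/-- The conditions for `(w, d, b, u)` to be a P-stationary point with parameter `γ > 0`,
with explicitly given multipliers `(θ, α, lam)`. -/
def IsPStationaryWith {m L : ℕ} (K : Fin L → Matrix (Fin m) (Fin m) ℝ)
    (y : Fin m → ℝ) (C γ : ℝ)
    (w : Fin m → ℝ) (d : Fin L → ℝ) (b : ℝ) (u : Fin m → ℝ)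
    (θ : Fin L → ℝ) (α : ℝ) (lam : Fin m → ℝ) : Prop :=
  (∀ ℓ, 0 ≤ d ℓ) ∧
  (∑ ℓ, d ℓ) = 1 ∧
  (∀ ℓ, 0 ≤ θ ℓ) ∧
  (∀ ℓ, θ ℓ * d ℓ = 0) ∧
  u + (Matrix.diagonal y * ∑ ℓ, d ℓ • K ℓ).mulVec w + b • y = 1 ∧
  w + (Matrix.diagonal y).mulVec lam = 0 ∧
  (∀ ℓ, -(1 / 2) * (w ⬝ᵥ (K ℓ).mulVec w) + α - θ ℓ = 0) ∧
  y ⬝ᵥ lam = 0 ∧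
  ∀ v : Fin m → ℝ,
    C * l0pos u + (1 / (2 * γ)) * ∑ i, (u i - (u i - γ * lam i)) ^ 2 ≤
    C * l0pos v + (1 / (2 * γ)) * ∑ i, (v i - (u i - γ * lam i)) ^ 2

/-- `(w, d, b, u)` is a P-stationary point with parameter `γ > 0`. -/
def IsPStationary {m L : ℕ} (K : Fin L → Matrix (Fin m) (Fin m) ℝ)
    (y : Fin m → ℝ) (C γ : ℝ)
    (w : Fin m → ℝ) (d : Fin L → ℝ) (b : ℝ) (u : Fin m → ℝ) : Prop :=
  ∃ (θ : Fin L → ℝ) (α : ℝ) (lam : Fin m → ℝ),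
    IsPStationaryWith K y C γ w d b u θ α lam

/-- The smallest eigenvalue of a Hermitian (real symmetric) matrix; junk value `0`
if the matrix is not Hermitian. -/
noncomputable def lambdaMin {m : ℕ} (A : Matrix (Fin m) (Fin m) ℝ) : ℝ :=
  if hA : A.IsHermitian then ⨅ i, hA.eigenvalues i else 0

open Filter Topology

section QuadraticForm

variable {n : Type*} {A B : Matrix n n ℝ} {c : ℝ}

lemma isHermitian_sum_smul {ι : Type*} [Fintype ι] {K : ι → Matrix n n ℝ}
    (hK : ∀ ℓ, (K ℓ).IsHermitian) (d : ι → ℝ) : (∑ ℓ, d ℓ • K ℓ).IsHermitian :=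
  isSelfAdjoint_sum _ fun ℓ _ => (hK ℓ).smul (IsSelfAdjoint.all _)

variable [Fintype n]

lemma dotProduct_self_nonneg (x : n → ℝ) : 0 ≤ x ⬝ᵥ x :=
  Finset.sum_nonneg fun _ _ => mul_self_nonneg _

theorem Matrix.IsHermitian.iInf_eigenvalues_mul_dotProduct_self_le [DecidableEq n]
    (hA : A.IsHermitian) (x : n → ℝ) :
    (⨅ i, hA.eigenvalues i) * (x ⬝ᵥ x) ≤ x ⬝ᵥ A *ᵥ x := by
  set U : Matrix n n ℝ := (hA.eigenvectorUnitary : Matrix n n ℝ)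
  set μ := hA.eigenvalues
  have hUU : U * Uᵀ = 1 := Matrix.mem_unitaryGroup_iff.mp hA.eigenvectorUnitary.2
  set z := Uᵀ *ᵥ x with hz
  have hA' : A = U * diagonal μ * Uᵀ := hA.spectral_theorem
  have hquad : x ⬝ᵥ A *ᵥ x = ∑ i, μ i * (z i * z i) := by
    rw [hA', ← mulVec_mulVec, ← mulVec_mulVec, dotProduct_mulVec, ← mulVec_transpose]
    simp only [z, mulVec_diagonal, dotProduct]
    exact Finset.sum_congr rfl fun i _ => by ring
  have hnorm : z ⬝ᵥ z = x ⬝ᵥ x := by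
    rw [hz, mulVec_transpose, ← dotProduct_mulVec, ← mulVec_transpose, mulVec_mulVec, hUU,
      one_mulVec]
  rw [hquad, ← hnorm, dotProduct, Finset.mul_sum]
  exact Finset.sum_le_sum fun i _ => mul_le_mul_of_nonneg_right
    (ciInf_le (Set.finite_range μ).bddBelow i) (mul_self_nonneg _)

lemma Matrix.IsHermitian.dotProduct_mulVec_comm (hB : B.IsHermitian) (v w : n → ℝ) :
    v ⬝ᵥ B *ᵥ w = w ⬝ᵥ B *ᵥ v := by
  rw [dotProduct_mulVec, ← mulVec_transpose, ← conjTranspose_eq_transpose_of_trivial, hB.eq,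
    dotProduct_comm]

lemma mul_dotProduct_mulVec_le_of_coercive (hc : 0 ≤ c)
    (hA : ∀ x, c * (x ⬝ᵥ x) ≤ x ⬝ᵥ A *ᵥ x) (x : n → ℝ) :
    c * (x ⬝ᵥ A *ᵥ x) ≤ A *ᵥ x ⬝ᵥ A *ᵥ x := by
  have hsq := dotProduct_self_nonneg (A *ᵥ x - c • x)
  have hexpand : (A *ᵥ x - c • x) ⬝ᵥ (A *ᵥ x - c • x) =
      A *ᵥ x ⬝ᵥ A *ᵥ x - 2 * c * (x ⬝ᵥ A *ᵥ x) + c * (c * (x ⬝ᵥ x)) := by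
    simp only [sub_dotProduct, dotProduct_sub, smul_dotProduct, dotProduct_smul, smul_eq_mul,
      dotProduct_comm (A *ᵥ x) x]
    ring
  nlinarith [mul_le_mul_of_nonneg_left (hA x) hc]

lemma mulVec_surjective_of_coercive [DecidableEq n] (hc : 0 < c)
    (hA : ∀ x, c * (x ⬝ᵥ x) ≤ x ⬝ᵥ A *ᵥ x) : Function.Surjective A.mulVec := by
  rw [mulVec_surjective_iff_isUnit, ← mulVec_injective_iff_isUnit]
  intro x₁ x₂ h
  have hle := hA (x₁ - x₂)
  rw [mulVec_sub, h, sub_self, dotProduct_zero] at hle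
  exact sub_eq_zero.mp (dotProduct_self_eq_zero.mp
    (le_antisymm (nonpos_of_mul_nonpos_right hle hc) (dotProduct_self_nonneg _)))

lemma dotProduct_mulVec_sub_of_mulVec_eq (hB : B.IsHermitian) {v w : n → ℝ}
    (h : A *ᵥ w = B *ᵥ v) :
    v ⬝ᵥ B *ᵥ v - w ⬝ᵥ A *ᵥ w = w ⬝ᵥ (A - B) *ᵥ w + (w - v) ⬝ᵥ B *ᵥ (w - v) := by
  have hcross : v ⬝ᵥ B *ᵥ w = w ⬝ᵥ A *ᵥ w := by rw [hB.dotProduct_mulVec_comm, ← h]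
  simp only [sub_mulVec, mulVec_sub, dotProduct_sub, sub_dotProduct, hcross, ← h]
  ring

end QuadraticForm

lemma mul_dotProduct_self_le_of_le_lambdaMin {m : ℕ} {A : Matrix (Fin m) (Fin m) ℝ}
    (hA : A.IsHermitian) {c : ℝ} (hc : c ≤ lambdaMin A) (x : Fin m → ℝ) :
    c * (x ⬝ᵥ x) ≤ x ⬝ᵥ A *ᵥ x := by
  rw [lambdaMin, dif_pos hA] at hc
  exact (mul_le_mul_of_nonneg_right hc (dotProduct_self_nonneg x)).trans
    (hA.iInf_eigenvalues_mul_dotProduct_self_le x)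

lemma nonpos_of_eventually_le_mul {D c : ℝ} (h : ∀ᶠ t in 𝓝[>] (0 : ℝ), D ≤ t * c) : D ≤ 0 := by
  have hlim : Tendsto (fun t => t * c) (𝓝[>] (0 : ℝ)) (𝓝 0) :=
    tendsto_nhdsWithin_of_tendsto_nhds (by simpa using (continuous_mul_const c).tendsto 0)
  exact ge_of_tendsto hlim h

section Simplex

variable {ι : Type*} [Fintype ι] {d q : ι → ℝ} {a : ℝ}

lemma le_sum_mul_of_mem_stdSimplex (hd : d ∈ stdSimplex ℝ ι) (h : ∀ j, 0 < d j → a ≤ q j) :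
    a ≤ ∑ j, d j * q j :=
  calc a = ∑ j, d j * a := by rw [← Finset.sum_mul, hd.2, one_mul]
    _ ≤ ∑ j, d j * q j := Finset.sum_le_sum fun j _ => by
      rcases (hd.1 j).eq_or_lt with hj | hj
      · simp [← hj]
      · exact mul_le_mul_of_nonneg_left (h j hj) hj.le

lemma sum_mul_le_of_mem_stdSimplex (hd : d ∈ stdSimplex ℝ ι) (h : ∀ j, 0 < d j → q j ≤ a) :
    ∑ j, d j * q j ≤ a := by
  simpa using le_sum_mul_of_mem_stdSimplex (q := -q) (a := -a) hd fun j hj => neg_le_neg (h j hj)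

lemma sub_mul_eq_zero_of_mem_stdSimplex (hd : d ∈ stdSimplex ℝ ι)
    (hsupp : ∀ i j, 0 < d j → q i ≤ q j) (i : ι) :
    (∑ j, d j * q j - q i) * d i = 0 := by
  rcases (hd.1 i).eq_or_lt with hi | hi
  · rw [← hi, mul_zero]
  · rw [le_antisymm (sum_mul_le_of_mem_stdSimplex hd fun j _ => hsupp j i hi)
      (le_sum_mul_of_mem_stdSimplex hd fun j hj => hsupp i j hj), sub_self, zero_mul]

variable [DecidableEq ι]

lemma add_smul_single_sub_single_mem_stdSimplex (hd : d ∈ stdSimplex ℝ ι) {i j : ι} {t : ℝ}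
    (ht : 0 ≤ t) (htj : t ≤ d j) : d + t • (Pi.single i 1 - Pi.single j 1) ∈ stdSimplex ℝ ι := by
  refine ⟨fun k => ?_, ?_⟩
  · have := hd.1 k
    simp only [Pi.add_apply, Pi.smul_apply, Pi.sub_apply, Pi.single_apply, smul_eq_mul]
    split_ifs <;> subst_vars <;> linarith
  · simp [Finset.sum_add_distrib, ← Finset.mul_sum, Finset.sum_sub_distrib, hd.2]

lemma sum_add_smul_single_sub_single_smul {M : Type*} [AddCommGroup M] [Module ℝ M]
    (K : ι → M) (d : ι → ℝ) (t : ℝ) (i j : ι) :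
    ∑ ℓ, (d + t • (Pi.single i 1 - Pi.single j 1) : ι → ℝ) ℓ • K ℓ =
      ∑ ℓ, d ℓ • K ℓ + t • (K i - K j) := by
  simp only [← Fintype.linearCombination_apply ℝ, map_add, map_smul, map_sub,
    Fintype.linearCombination_apply_single, one_smul]

end Simplex

section MKL

variable {m L : ℕ} (K : Fin L → Matrix (Fin m) (Fin m) ℝ) (y : Fin m → ℝ) (C : ℝ)

def mklSlack (w : Fin m → ℝ) (d : Fin L → ℝ) (b : ℝ) : Fin m → ℝ :=
  1 - (diagonal y * ∑ ℓ, d ℓ • K ℓ) *ᵥ w - b • y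

noncomputable def mklObjective (w : Fin m → ℝ) (d : Fin L → ℝ) (b : ℝ) : ℝ :=
  (1 / 2) * (w ⬝ᵥ (∑ ℓ, d ℓ • K ℓ) *ᵥ w) + C * l0pos (mklSlack K y w d b)

def IsMklMinimizer (w : Fin m → ℝ) (d : Fin L → ℝ) (b : ℝ) : Prop :=
  d ∈ stdSimplex ℝ (Fin L) ∧ ∀ w', ∀ d' ∈ stdSimplex ℝ (Fin L), ∀ b',
    mklObjective K y C w d b ≤ mklObjective K y C w' d' b'

variable {K y C} {w : Fin m → ℝ} {d : Fin L → ℝ} {b : ℝ}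

lemma IsMklMinimizer.mul_l0pos_slack_le (h : IsMklMinimizer K y C w d b)
    (hK : ∀ ℓ, (K ℓ).IsHermitian) (q : Fin m → ℝ) (t : ℝ) :
    C * l0pos (mklSlack K y w d b) ≤
      C * l0pos (mklSlack K y w d b - diagonal y *ᵥ (∑ ℓ, d ℓ • K ℓ) *ᵥ q - t • y) +
        w ⬝ᵥ (∑ ℓ, d ℓ • K ℓ) *ᵥ q + (1 / 2) * (q ⬝ᵥ (∑ ℓ, d ℓ • K ℓ) *ᵥ q) := by
  have hslack : mklSlack K y (w + q) d (b + t) =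
      mklSlack K y w d b - diagonal y *ᵥ (∑ ℓ, d ℓ • K ℓ) *ᵥ q - t • y := by
    simp only [mklSlack, mulVec_add, ← mulVec_mulVec, add_smul]
    abel
  have hquad : (w + q) ⬝ᵥ (∑ ℓ, d ℓ • K ℓ) *ᵥ (w + q) = w ⬝ᵥ (∑ ℓ, d ℓ • K ℓ) *ᵥ w +
      2 * (w ⬝ᵥ (∑ ℓ, d ℓ • K ℓ) *ᵥ q) + q ⬝ᵥ (∑ ℓ, d ℓ • K ℓ) *ᵥ q := by
    rw [mulVec_add, dotProduct_add, add_dotProduct, add_dotProduct,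
      (isHermitian_sum_smul hK d).dotProduct_mulVec_comm q w]
    ring
  have hle := h.2 (w + q) d h.1 (b + t)
  rw [mklObjective, mklObjective, hslack, hquad] at hle
  linarith

lemma IsMklMinimizer.sum_eq_zero (h : IsMklMinimizer K y C w d b) (hK : ∀ ℓ, (K ℓ).IsHermitian)
    (hsurj : Function.Surjective (∑ ℓ, d ℓ • K ℓ).mulVec) : ∑ i, w i = 0 := by
  obtain ⟨q, hq⟩ := hsurj 1
  have hy1 : diagonal y *ᵥ (1 : Fin m → ℝ) = y := by
    ext i
    simp [mulVec_diagonal]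
  -- shifting `b` by `-t` compensates moving `w` by `t • q`, so the slack is unchanged
  have hquad : ∀ t, 0 ≤ t * ∑ i, w i + t ^ 2 * ((1 / 2) * ∑ i, q i) := fun t => by
    have hle := h.mul_l0pos_slack_le hK (t • q) (-t)
    rw [mulVec_smul, hq, mulVec_smul, hy1, neg_smul, sub_neg_eq_add, sub_add_cancel] at hle
    simp only [dotProduct_smul, dotProduct_one, Pi.smul_apply, smul_eq_mul, ← Finset.mul_sum] at hle
    linarith
  have hsmall : ∀ t > 0, -∑ i, w i ≤ t * ((1 / 2) * ∑ i, q i) ∧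
      ∑ i, w i ≤ t * ((1 / 2) * ∑ i, q i) := fun t ht => by
    have h₁ := hquad t
    have h₂ := hquad (-t)
    constructor <;> nlinarith
  exact le_antisymm
    (nonpos_of_eventually_le_mul (eventually_nhdsWithin_of_forall fun t ht => (hsmall t ht).2))
    (neg_nonpos.mp
      (nonpos_of_eventually_le_mul (eventually_nhdsWithin_of_forall fun t ht => (hsmall t ht).1)))

lemma IsMklMinimizer.dotProduct_mulVec_le_of_pos (h : IsMklMinimizer K y C w d b)
    (hK : ∀ ℓ, (K ℓ).IsHermitian) {c : ℝ} (hc : 0 < c)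
    (hcoer : ∀ d' ∈ stdSimplex ℝ (Fin L), ∀ x, c * (x ⬝ᵥ x) ≤ x ⬝ᵥ (∑ ℓ, d' ℓ • K ℓ) *ᵥ x)
    (i : Fin L) {j : Fin L} (hj : 0 < d j) : w ⬝ᵥ K i *ᵥ w ≤ w ⬝ᵥ K j *ᵥ w := by
  set z := K i *ᵥ w - K j *ᵥ w
  refine sub_nonpos.mp (nonpos_of_eventually_le_mul (c := z ⬝ᵥ z / c) ?_)
  filter_upwards [Ioc_mem_nhdsGT hj] with t ⟨ht, htj⟩
  set d' := d + t • (Pi.single i 1 - Pi.single j 1)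
  have hd' : d' ∈ stdSimplex ℝ (Fin L) := add_smul_single_sub_single_mem_stdSimplex h.1 ht.le htj
  have hM' : ∑ ℓ, d' ℓ • K ℓ = ∑ ℓ, d ℓ • K ℓ + t • (K i - K j) :=
    sum_add_smul_single_sub_single_smul K d t i j
  -- move mass `t` from `j` to `i`, re-solving for `w` so that the slack stays the same
  obtain ⟨v, hv⟩ := mulVec_surjective_of_coercive hc (hcoer d' hd') ((∑ ℓ, d ℓ • K ℓ) *ᵥ w)
  have hslack : mklSlack K y v d' b = mklSlack K y w d b := by
    simp only [mklSlack, ← mulVec_mulVec, hv]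
  have hle := h.2 v d' hd' b
  rw [mklObjective, mklObjective, hslack] at hle
  have hid := dotProduct_mulVec_sub_of_mulVec_eq (isHermitian_sum_smul hK d') hv.symm
  have hgap : w ⬝ᵥ (∑ ℓ, d ℓ • K ℓ - ∑ ℓ, d' ℓ • K ℓ) *ᵥ w =
      -(t * (w ⬝ᵥ K i *ᵥ w - w ⬝ᵥ K j *ᵥ w)) := by
    rw [hM', sub_add_cancel_left, neg_mulVec, smul_mulVec, sub_mulVec, dotProduct_neg,
      dotProduct_smul, dotProduct_sub, smul_eq_mul]
  have hdiff : (∑ ℓ, d' ℓ • K ℓ) *ᵥ (w - v) = t • z := by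
    rw [mulVec_sub, hv, hM', add_mulVec, smul_mulVec, sub_mulVec]
    abel
  have hbound : c * ((w - v) ⬝ᵥ (∑ ℓ, d' ℓ • K ℓ) *ᵥ (w - v)) ≤ t * (t * (z ⬝ᵥ z)) :=
    calc _ ≤ _ := mul_dotProduct_mulVec_le_of_coercive hc.le (hcoer d' hd') (w - v)
      _ = t * (t * (z ⬝ᵥ z)) := by
        rw [hdiff, smul_dotProduct, dotProduct_smul, smul_eq_mul, smul_eq_mul]
  rw [mul_div_assoc', le_div_iff₀ hc]
  have hscaled : t * ((w ⬝ᵥ K i *ᵥ w - w ⬝ᵥ K j *ᵥ w) * c) ≤ t * (t * (z ⬝ᵥ z)) := by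
    nlinarith
  exact le_of_mul_le_mul_left hscaled ht

lemma IsMklMinimizer.prox_le (h : IsMklMinimizer K y C w d b) (hK : ∀ ℓ, (K ℓ).IsHermitian)
    (hy : ∀ i, y i * y i = 1) {γ : ℝ} (hγ : 0 < γ)
    (hcoer : ∀ x, γ * (x ⬝ᵥ x) ≤ x ⬝ᵥ (∑ ℓ, d ℓ • K ℓ) *ᵥ x) (v : Fin m → ℝ) :
    C * l0pos (mklSlack K y w d b) + (1 / (2 * γ)) * ∑ i,
        (mklSlack K y w d b i - (mklSlack K y w d b i - γ * -(y i * w i))) ^ 2 ≤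
      C * l0pos v + (1 / (2 * γ)) * ∑ i,
        (v i - (mklSlack K y w d b i - γ * -(y i * w i))) ^ 2 := by
  set u := mklSlack K y w d b
  set p := diagonal y *ᵥ (u - v)
  obtain ⟨q, hq⟩ := mulVec_surjective_of_coercive hγ hcoer p
  have hyp : diagonal y *ᵥ p = u - v := by
    ext i
    simp [p, mulVec_diagonal, ← mul_assoc, hy]
  have hle := h.mul_l0pos_slack_le hK q 0
  rw [hq, hyp, zero_smul, sub_zero, sub_sub_cancel] at hle
  have hqp : γ * (q ⬝ᵥ p) ≤ p ⬝ᵥ p := by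
    simpa only [hq] using mul_dotProduct_mulVec_le_of_coercive hγ.le hcoer q
  have hL : ∑ i, (u i - (u i - γ * -(y i * w i))) ^ 2 = γ ^ 2 * (w ⬝ᵥ w) := by
    rw [dotProduct, Finset.mul_sum]
    exact Finset.sum_congr rfl fun i _ => by linear_combination (γ ^ 2 * w i ^ 2) * hy i
  have hR : ∑ i, (v i - (u i - γ * -(y i * w i))) ^ 2 =
      p ⬝ᵥ p + 2 * γ * (w ⬝ᵥ p) + γ ^ 2 * (w ⬝ᵥ w) := by
    simp only [p, dotProduct, mulVec_diagonal, Pi.sub_apply, Finset.mul_sum,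
      ← Finset.sum_add_distrib]
    exact Finset.sum_congr rfl fun i _ => by
      linear_combination (γ ^ 2 * w i ^ 2 - (u i - v i) ^ 2) * hy i
  rw [hL, hR]
  have hqp' : (1 / 2) * (q ⬝ᵥ p) ≤ (1 / (2 * γ)) * (p ⬝ᵥ p) := by
    rw [show (1 / 2) * (q ⬝ᵥ p) = (1 / (2 * γ)) * (γ * (q ⬝ᵥ p)) by field_simp]
    gcongr
  have hγw : (1 / (2 * γ)) * (γ ^ 2 * (w ⬝ᵥ w)) = γ / 2 * (w ⬝ᵥ w) := by field_simp
  have hγp : (1 / (2 * γ)) * (2 * γ * (w ⬝ᵥ p)) = w ⬝ᵥ p := by field_simp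
  rw [mul_add, mul_add, hγw, hγp]
  linarith

lemma IsMklMinimizer.isPStationary (h : IsMklMinimizer K y C w d b)
    (hK : ∀ ℓ, (K ℓ).IsHermitian) (hy : ∀ i, y i * y i = 1) {c : ℝ} (hc : 0 < c)
    (hcoer : ∀ d' ∈ stdSimplex ℝ (Fin L), ∀ x, c * (x ⬝ᵥ x) ≤ x ⬝ᵥ (∑ ℓ, d' ℓ • K ℓ) *ᵥ x)
    {γ : ℝ} (hγ : 0 < γ) (hγc : γ ≤ c) :
    IsPStationary K y C γ w d b (mklSlack K y w d b) := by
  have hγcoer : ∀ x, γ * (x ⬝ᵥ x) ≤ x ⬝ᵥ (∑ ℓ, d ℓ • K ℓ) *ᵥ x := fun x =>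
    (mul_le_mul_of_nonneg_right hγc (dotProduct_self_nonneg x)).trans (hcoer d h.1 x)
  have hsum := h.sum_eq_zero hK (mulVec_surjective_of_coercive hc (hcoer d h.1))
  have hsupp : ∀ i j, 0 < d j → w ⬝ᵥ K i *ᵥ w ≤ w ⬝ᵥ K j *ᵥ w :=
    fun i _ hj => h.dotProduct_mulVec_le_of_pos hK hc hcoer i hj
  set q := fun ℓ => w ⬝ᵥ K ℓ *ᵥ w
  refine ⟨fun ℓ => (1 / 2) * (∑ j, d j * q j - q ℓ), (1 / 2) * ∑ j, d j * q j,
    fun i => -(y i * w i), h.1.1, h.1.2, fun ℓ => ?_, fun ℓ => ?_, by simp only [mklSlack]; abel,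
    ?_, fun ℓ => by ring, ?_, h.prox_le hK hy hγ hγcoer⟩
  · exact mul_nonneg (by norm_num) (sub_nonneg.mpr (le_sum_mul_of_mem_stdSimplex h.1 (hsupp ℓ)))
  · rw [mul_assoc, sub_mul_eq_zero_of_mem_stdSimplex h.1 hsupp, mul_zero]
  · ext i
    simp only [Pi.add_apply, mulVec_diagonal, Pi.zero_apply]
    linear_combination (-w i) * hy i
  · calc y ⬝ᵥ (fun i => -(y i * w i)) = -∑ i, w i := by
          rw [dotProduct, ← Finset.sum_neg_distrib]
          exact Finset.sum_congr rfl fun i _ => by linear_combination (-w i) * hy i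
      _ = 0 := by rw [hsum, neg_zero]

end MKL

theorem stmt_7_general (m L : ℕ)
    (y : Fin m → ℝ) (hy : ∀ i, y i = 1 ∨ y i = -1)
    (K : Fin L → Matrix (Fin m) (Fin m) ℝ) (hK : ∀ ℓ, (K ℓ).PosDef)
    (C : ℝ)
    (Δ : Set (Fin L → ℝ)) (hΔ : Δ = {d | (∀ ℓ, 0 ≤ d ℓ) ∧ (∑ ℓ, d ℓ) = 1})
    (J : (Fin m → ℝ) × (Fin L → ℝ) × ℝ → ℝ)
    (hJ : ∀ (w : Fin m → ℝ) (d : Fin L → ℝ) (b : ℝ),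
      J (w, d, b) =
        (1 / 2) * (w ⬝ᵥ (∑ ℓ, d ℓ • K ℓ).mulVec w) +
        C * l0pos (1 - (Matrix.diagonal y * ∑ ℓ, d ℓ • K ℓ).mulVec w - b • y))
    (C₁ : ℝ) (hC₁pos : 0 < C₁)
    (hC₁ : IsLeast {r | ∃ d ∈ Δ, lambdaMin (∑ ℓ, d ℓ • K ℓ) = r} C₁)
    (wstar : Fin m → ℝ) (dstar : Fin L → ℝ) (bstar : ℝ)
    (hdstar : dstar ∈ Δ)
    (hmin : ∀ (w : Fin m → ℝ) (d : Fin L → ℝ) (b : ℝ), d ∈ Δ →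
      J (wstar, dstar, bstar) ≤ J (w, d, b))
    (ustar : Fin m → ℝ)
    (hustar : ustar =
      1 - (Matrix.diagonal y * ∑ ℓ, dstar ℓ • K ℓ).mulVec wstar - bstar • y) :
    ∀ γ : ℝ, 0 < γ → γ < C₁ →
      IsPStationary K y C γ wstar dstar bstar ustar := by
  intro γ hγ hγC₁
  subst hΔ hustar
  have hherm : ∀ ℓ, (K ℓ).IsHermitian := fun ℓ => (hK ℓ).isHermitian
  have hcoer : ∀ d ∈ stdSimplex ℝ (Fin L), ∀ x, C₁ * (x ⬝ᵥ x) ≤ x ⬝ᵥ (∑ ℓ, d ℓ • K ℓ) *ᵥ x :=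
    fun d hd => mul_dotProduct_self_le_of_le_lambdaMin (isHermitian_sum_smul hherm d)
      (hC₁.2 ⟨d, hd, rfl⟩)
  have hminimizer : IsMklMinimizer K y C wstar dstar bstar := ⟨hdstar, fun w d hd b => by
    have hle := hmin w d b hd
    rwa [hJ, hJ] at hle⟩
  exact hminimizer.isPStationary hherm (fun i => mul_self_eq_one_iff.mpr (hy i)) hC₁pos hcoer hγ
    hγC₁.le

/-- Theorem 4, part 1: a global minimizer of the MKL-L₀/₁-SVM problem is a
P-stationary point for every `0 < γ < C₁`. -/
theorem stmt_7 (m L : ℕ) (hm : 1 ≤ m) (hL : 1 ≤ L)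
    (y : Fin m → ℝ) (hy : ∀ i, y i = 1 ∨ y i = -1)
    (K : Fin L → Matrix (Fin m) (Fin m) ℝ) (hK : ∀ ℓ, (K ℓ).PosDef)
    (C : ℝ) (hC : 0 < C)
    (Δ : Set (Fin L → ℝ)) (hΔ : Δ = {d | (∀ ℓ, 0 ≤ d ℓ) ∧ (∑ ℓ, d ℓ) = 1})
    (J : (Fin m → ℝ) × (Fin L → ℝ) × ℝ → ℝ)
    (hJ : ∀ (w : Fin m → ℝ) (d : Fin L → ℝ) (b : ℝ),
      J (w, d, b) =
        (1 / 2) * (w ⬝ᵥ (∑ ℓ, d ℓ • K ℓ).mulVec w) +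
        C * l0pos (1 - (Matrix.diagonal y * ∑ ℓ, d ℓ • K ℓ).mulVec w - b • y))
    (C₁ : ℝ) (hC₁pos : 0 < C₁)
    (hC₁ : IsLeast {r | ∃ d ∈ Δ, lambdaMin (∑ ℓ, d ℓ • K ℓ) = r} C₁)
    (wstar : Fin m → ℝ) (dstar : Fin L → ℝ) (bstar : ℝ)
    (hdstar : dstar ∈ Δ)
    (hmin : ∀ (w : Fin m → ℝ) (d : Fin L → ℝ) (b : ℝ), d ∈ Δ →
      J (wstar, dstar, bstar) ≤ J (w, d, b))
    (ustar : Fin m → ℝ)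
    (hustar : ustar =
      1 - (Matrix.diagonal y * ∑ ℓ, dstar ℓ • K ℓ).mulVec wstar - bstar • y) :
    ∀ γ : ℝ, 0 < γ → γ < C₁ →
      IsPStationary K y C γ wstar dstar bstar ustar :=
  stmt_7_general m L y hy K hK C Δ hΔ J hJ C₁ hC₁pos hC₁ wstar dstar bstar hdstar hmin ustar hustar
end

section
/- Let Q be a symmetric positive definite m×m real matrix, y ∈ ℝ^m with y_i ∈ {−1, 1} for all i, 1 the all-ones vector in ℝ^m, and C > 0. Define g(u, b) = (1/2)(1 − u − b y)ᵀ Q⁻¹ (1 − u − b y). Suppose (u*, b*) ∈ ℝ^m × ℝ is a global minimizer of (u, b) ↦ g(u, b) + C‖u₊‖₀, and set λ* = −Q⁻¹(1 − u* − b* y). Then for every γ with 0 < γ < λ_min(Q), the vector u* is a global minimizer over v ∈ ℝ^m of the function v ↦ C‖v₊‖₀ + (1/(2γ))‖v − (u* − γλ*)‖²; that is, u* = prox_{γC‖(·)₊‖₀}(u* − γλ*). -/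
open Matrix

/-!
Fix `b = b*` and perturb `u* ↦ v = u* + d`. Since `g(·, b*)` is quadratic with Hessian `Q⁻¹`
and gradient `λ*` at `u*`, minimality gives
`C‖u*₊‖₀ ≤ C‖v₊‖₀ + ⟪λ*, d⟫ + ½ dᵀQ⁻¹d`, and `Q⁻¹ ≤ γ⁻¹ I` when `γ < λ_min(Q)`.
The right-hand side is then at most `C‖v₊‖₀ + ⟪λ*, d⟫ + ‖d‖²/(2γ)`, which is exactly the
proximal objective at `v` minus its value at `u*`, up to the common constant `γ‖λ*‖²/2`.
-/

namespace Matrix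

variable {n : Type*} [Fintype n]

theorem IsSymm.sub_dotProduct_mulVec_sub {R : Type*} [CommRing R] {A : Matrix n n R}
    (hA : A.IsSymm) (w d : n → R) :
    (w - d) ⬝ᵥ A *ᵥ (w - d) = w ⬝ᵥ A *ᵥ w - 2 * ((A *ᵥ w) ⬝ᵥ d) + d ⬝ᵥ A *ᵥ d := by
  have hswap : w ⬝ᵥ A *ᵥ d = d ⬝ᵥ A *ᵥ w := by
    rw [dotProduct_mulVec, ← mulVec_transpose, hA.eq, dotProduct_comm]
  rw [mulVec_sub, sub_dotProduct, dotProduct_sub, dotProduct_sub, hswap,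
    dotProduct_comm (A *ᵥ w) d]
  ring

variable [DecidableEq n]

theorem mulVec_dotProduct_mulVec_of_transpose_mul_self {R : Type*} [CommSemiring R]
    {V : Matrix n n R} (hV : Vᵀ * V = 1) (a b : n → R) :
    (V *ᵥ a) ⬝ᵥ (V *ᵥ b) = a ⬝ᵥ b := by
  rw [dotProduct_mulVec, ← mulVec_transpose, mulVec_mulVec, hV, one_mulVec]

theorem IsHermitian.exists_dotProduct_mulVec_eq_sum_eigenvalues {Q : Matrix n n ℝ}
    (hQ : Q.IsHermitian) (x : n → ℝ) :
    ∃ w : n → ℝ, x ⬝ᵥ Q *ᵥ x = ∑ i, hQ.eigenvalues i * w i ^ 2 ∧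
      (Q *ᵥ x) ⬝ᵥ (Q *ᵥ x) = ∑ i, hQ.eigenvalues i ^ 2 * w i ^ 2 := by
  set V : Matrix n n ℝ := (hQ.eigenvectorUnitary : Matrix n n ℝ)
  have hstar : star V = Vᵀ := by
    rw [star_eq_conjTranspose, conjTranspose_eq_transpose_of_trivial]
  have hVV : Vᵀ * V = 1 := hstar ▸ Unitary.coe_star_mul_self hQ.eigenvectorUnitary
  have hspec : Q = V * diagonal hQ.eigenvalues * Vᵀ := by
    rw [← hstar]
    exact hQ.spectral_theorem.trans (Unitary.conjStarAlgAut_apply _ _)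
  have hQx : Q *ᵥ x = V *ᵥ (diagonal hQ.eigenvalues *ᵥ (Vᵀ *ᵥ x)) := by
    rw [mulVec_mulVec, mulVec_mulVec, ← hspec]
  refine ⟨Vᵀ *ᵥ x, ?_, ?_⟩
  · rw [hQx, dotProduct_mulVec, ← mulVec_transpose]
    simp only [dotProduct, mulVec_diagonal]
    exact Finset.sum_congr rfl fun i _ => by ring
  · rw [hQx, mulVec_dotProduct_mulVec_of_transpose_mul_self hVV]
    simp only [dotProduct, mulVec_diagonal]
    exact Finset.sum_congr rfl fun i _ => by ring

theorem IsHermitian.mul_dotProduct_mulVec_le {Q : Matrix n n ℝ} (hQ : Q.IsHermitian)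
    {γ : ℝ} (hγ : 0 ≤ γ) (hle : ∀ i, γ ≤ hQ.eigenvalues i) (x : n → ℝ) :
    γ * (x ⬝ᵥ Q *ᵥ x) ≤ (Q *ᵥ x) ⬝ᵥ (Q *ᵥ x) := by
  obtain ⟨w, hquad, hsq⟩ := hQ.exists_dotProduct_mulVec_eq_sum_eigenvalues x
  rw [hquad, hsq, Finset.mul_sum]
  refine Finset.sum_le_sum fun i _ => ?_
  have hγe : γ * hQ.eigenvalues i ≤ hQ.eigenvalues i ^ 2 := by
    nlinarith [mul_nonneg (hγ.trans (hle i)) (sub_nonneg.2 (hle i))]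
  linarith [mul_le_mul_of_nonneg_right hγe (sq_nonneg (w i))]

theorem PosDef.dotProduct_inv_mulVec_le {Q : Matrix n n ℝ} (hQ : Q.PosDef) {γ : ℝ}
    (hγ : 0 < γ) (hle : ∀ i, γ ≤ hQ.isHermitian.eigenvalues i) (d : n → ℝ) :
    d ⬝ᵥ Q⁻¹ *ᵥ d ≤ γ⁻¹ * (d ⬝ᵥ d) := by
  set e := Q⁻¹ *ᵥ d
  have hQe : Q *ᵥ e = d := by
    rw [mulVec_mulVec, mul_nonsing_inv Q (isUnit_iff_ne_zero.mpr hQ.det_pos.ne'), one_mulVec]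
  have key := hQ.isHermitian.mul_dotProduct_mulVec_le hγ.le hle e
  rw [dotProduct_comm e, hQe] at key
  rw [le_inv_mul_iff₀ hγ]
  exact key

end Matrix

theorem lt_eigenvalues_of_lt_lambdaMin {m : ℕ} {A : Matrix (Fin m) (Fin m) ℝ}
    (hA : A.IsHermitian) {γ : ℝ} (hγ : γ < lambdaMin A) (i : Fin m) :
    γ < hA.eigenvalues i := by
  rw [lambdaMin, dif_pos hA] at hγ
  exact hγ.trans_le (ciInf_le (Set.finite_range _).bddBelow i)

theorem sum_sub_sub_mul_sq {n : Type*} [Fintype n] (u v l : n → ℝ) {γ : ℝ} (hγ : γ ≠ 0) :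
    1 / (2 * γ) * ∑ i, (v i - (u i - γ * l i)) ^ 2 =
      1 / (2 * γ) * ((v - u) ⬝ᵥ (v - u)) + l ⬝ᵥ (v - u) + γ / 2 * (l ⬝ᵥ l) := by
  simp only [dotProduct, Pi.sub_apply, Finset.mul_sum, ← Finset.sum_add_distrib]
  refine Finset.sum_congr rfl fun i _ => ?_
  field_simp
  ring

theorem stmt_9_general (m : ℕ)
    (Q : Matrix (Fin m) (Fin m) ℝ) (hQ : Q.PosDef)
    (y : Fin m → ℝ)
    (C : ℝ)
    (g : (Fin m → ℝ) → ℝ → ℝ)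
    (hg : ∀ (u : Fin m → ℝ) (b : ℝ),
      g u b = (1 / 2) * ((1 - u - b • y) ⬝ᵥ Q⁻¹.mulVec (1 - u - b • y)))
    (ustar : Fin m → ℝ) (bstar : ℝ)
    (hmin : ∀ (u : Fin m → ℝ) (b : ℝ),
      g ustar bstar + C * l0pos ustar ≤ g u b + C * l0pos u)
    (lamstar : Fin m → ℝ)
    (hlam : lamstar = -(Q⁻¹.mulVec (1 - ustar - bstar • y))) :
    ∀ γ : ℝ, 0 < γ → γ < lambdaMin Q →
      ∀ v : Fin m → ℝ,
        C * l0pos ustar + (1 / (2 * γ)) * ∑ i, (ustar i - (ustar i - γ * lamstar i)) ^ 2 ≤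
        C * l0pos v + (1 / (2 * γ)) * ∑ i, (v i - (ustar i - γ * lamstar i)) ^ 2 := by
  intro γ hγ hγQ v
  set d := v - ustar
  have hgv : g v bstar = g ustar bstar + lamstar ⬝ᵥ d + 1 / 2 * (d ⬝ᵥ Q⁻¹ *ᵥ d) := by
    have hres : 1 - v - bstar • y = (1 - ustar - bstar • y) - d := by
      simp only [d]; abel
    have hsymm : Q⁻¹.IsSymm := (isHermitian_iff_isSymm.mp hQ.isHermitian).inv
    rw [hg, hg, hres, hsymm.sub_dotProduct_mulVec_sub, hlam, neg_dotProduct]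
    ring
  have hbound : d ⬝ᵥ Q⁻¹ *ᵥ d ≤ γ⁻¹ * (d ⬝ᵥ d) :=
    hQ.dotProduct_inv_mulVec_le hγ
      (fun i => (lt_eigenvalues_of_lt_lambdaMin hQ.isHermitian hγQ i).le) d
  rw [sum_sub_sub_mul_sq _ _ _ hγ.ne', sum_sub_sub_mul_sq _ _ _ hγ.ne', sub_self,
    dotProduct_zero, dotProduct_zero, mul_zero]
  have hscale : 1 / (2 * γ) * (d ⬝ᵥ d) = 1 / 2 * (γ⁻¹ * (d ⬝ᵥ d)) := by ring
  linarith [hmin v bstar]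

/-- A global minimizer `(u*, b*)` of `g(u,b) + C‖u₊‖₀` satisfies the proximal fixed-point
condition `u* = prox_{γC‖(·)₊‖₀}(u* − γλ*)` for every `0 < γ < λ_min(Q)`. -/
theorem stmt_9 (m : ℕ) (hm : 1 ≤ m)
    (Q : Matrix (Fin m) (Fin m) ℝ) (hQ : Q.PosDef)
    (y : Fin m → ℝ) (hy : ∀ i, y i = 1 ∨ y i = -1)
    (C : ℝ) (hC : 0 < C)
    (g : (Fin m → ℝ) → ℝ → ℝ)
    (hg : ∀ (u : Fin m → ℝ) (b : ℝ),
      g u b = (1 / 2) * ((1 - u - b • y) ⬝ᵥ Q⁻¹.mulVec (1 - u - b • y)))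
    (ustar : Fin m → ℝ) (bstar : ℝ)
    (hmin : ∀ (u : Fin m → ℝ) (b : ℝ),
      g ustar bstar + C * l0pos ustar ≤ g u b + C * l0pos u)
    (lamstar : Fin m → ℝ)
    (hlam : lamstar = -(Q⁻¹.mulVec (1 - ustar - bstar • y))) :
    ∀ γ : ℝ, 0 < γ → γ < lambdaMin Q →
      ∀ v : Fin m → ℝ,
        C * l0pos ustar + (1 / (2 * γ)) * ∑ i, (ustar i - (ustar i - γ * lamstar i)) ^ 2 ≤
        C * l0pos v + (1 / (2 * γ)) * ∑ i, (v i - (ustar i - γ * lamstar i)) ^ 2 :=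
  stmt_9_general m Q hQ y C g hg ustar bstar hmin lamstar hlam
end

section
/- Let γ > 0, C > 0 and u*, λ* ∈ ℝ^m, and suppose u* is a global minimizer over v ∈ ℝ^m of the function v ↦ C‖v₊‖₀ + (1/(2γ))‖v − (u* − γλ*)‖². Then for every index i ∈ {1,…,m}, either λ*_i = 0, or both u*_i = 0 and −√(2C/γ) ≤ λ*_i < 0 hold. In particular, λ*_i ≠ 0 implies u*_i = 0. -/
lemma le_apply_of_sum_le {ι : Type*} [Fintype ι] [DecidableEq ι] {α : ι → Type*}
    {β : Type*} [AddCommMonoid β] [PartialOrder β] [IsOrderedCancelAddMonoid β]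
    (g : ∀ i, α i → β) {x : ∀ i, α i} (hx : ∀ y : ∀ i, α i, ∑ i, g i (x i) ≤ ∑ i, g i (y i))
    (i : ι) (t : α i) : g i (x i) ≤ g i t := by
  have h := hx (Function.update x i t)
  simp only [Function.apply_update (fun j => g j) x i t] at h
  rw [Finset.sum_update_of_mem (Finset.mem_univ i),
    ← Finset.add_sum_erase _ _ (Finset.mem_univ i), ← Finset.sdiff_singleton_eq_erase] at h
  exact le_of_add_le_add_right h

lemma l0pos_eq_sum {m : ℕ} (v : Fin m → ℝ) :
    l0pos v = ∑ i, if 0 < v i then 1 else 0 := by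
  simp [l0pos, Finset.sum_boole]

noncomputable def posL0ProxObjective (γ C z t : ℝ) : ℝ :=
  C * (if 0 < t then 1 else 0) + 1 / (2 * γ) * (t - z) ^ 2

lemma mul_l0pos_add_sum_sq_eq_sum {m : ℕ} (γ C : ℝ) (z v : Fin m → ℝ) :
    C * l0pos v + 1 / (2 * γ) * ∑ i, (v i - z i) ^ 2 =
      ∑ i, posL0ProxObjective γ C (z i) (v i) := by
  simp only [l0pos_eq_sum, posL0ProxObjective, Finset.mul_sum, Finset.sum_add_distrib]

lemma eq_zero_or_of_isMin_posL0ProxObjective {γ C u l : ℝ} (hγ : 0 < γ) (hC : 0 < C)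
    (hmin : ∀ t, posL0ProxObjective γ C (u - γ * l) u ≤ posL0ProxObjective γ C (u - γ * l) t) :
    l = 0 ∨ (u = 0 ∧ -Real.sqrt (2 * C / γ) ≤ l ∧ l < 0) := by
  refine or_iff_not_imp_left.2 fun hl => ?_
  have hsq : 0 < γ * l ^ 2 := by positivity
  have hz := hmin (u - γ * l)
  have hzero := hmin 0
  have hquad : 1 / (2 * γ) * (u - (u - γ * l)) ^ 2 = γ * l ^ 2 / 2 := by field_simp; ring
  simp only [posL0ProxObjective, hquad, sub_self, lt_irrefl, if_false] at hz hzero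
  have hsign : ¬0 < u ∧ 0 < u - γ * l := by
    by_cases hu : 0 < u <;> by_cases hz' : 0 < u - γ * l <;>
      simp only [hu, hz', if_true, if_false] at hz
    all_goals first | exact ⟨hu, hz'⟩ | linarith
  obtain ⟨hu, hz'⟩ := hsign
  rw [not_lt] at hu
  simp only [hu.not_gt, hz', if_true, if_false] at hz hzero
  have hl : l < 0 := neg_of_mul_neg_right (by linarith) hγ.le
  have hu0 : u = 0 := by
    have hexpand : 1 / (2 * γ) * (0 - (u - γ * l)) ^ 2 =
        γ * l ^ 2 / 2 + u * (u - 2 * (γ * l)) / (2 * γ) := by field_simp; ring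
    have h2 : 0 ≤ u * (u - 2 * (γ * l)) / (2 * γ) := by linarith
    rw [le_div_iff₀ (by positivity), zero_mul] at h2
    exact le_antisymm hu (nonneg_of_mul_nonneg_left h2 (by linarith))
  have hl2 : l ^ 2 ≤ 2 * C / γ := by
    rw [le_div_iff₀ hγ]
    linarith
  exact ⟨hu0, Real.neg_sqrt_le_of_sq_le hl2, hl⟩

/-- If `u*` satisfies the proximal fixed-point condition `u* = prox_{γC‖(·)₊‖₀}(u* − γλ*)`,
then componentwise either `λ*_i = 0`, or `u*_i = 0` and `−√(2C/γ) ≤ λ*_i < 0`; in particular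
`λ*_i ≠ 0` implies `u*_i = 0`. -/
theorem stmt_10 (m : ℕ) (γ C : ℝ) (hγ : 0 < γ) (hC : 0 < C)
    (ustar lamstar : Fin m → ℝ)
    (hmin : ∀ v : Fin m → ℝ,
      C * l0pos ustar + (1 / (2 * γ)) * ∑ i, (ustar i - (ustar i - γ * lamstar i)) ^ 2 ≤
      C * l0pos v + (1 / (2 * γ)) * ∑ i, (v i - (ustar i - γ * lamstar i)) ^ 2) :
    (∀ i : Fin m, lamstar i = 0 ∨
      (ustar i = 0 ∧ -Real.sqrt (2 * C / γ) ≤ lamstar i ∧ lamstar i < 0)) ∧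
    (∀ i : Fin m, lamstar i ≠ 0 → ustar i = 0) := by
  simp only [mul_l0pos_add_sum_sq_eq_sum] at hmin
  have hcoord (i : Fin m) :
      lamstar i = 0 ∨ (ustar i = 0 ∧ -Real.sqrt (2 * C / γ) ≤ lamstar i ∧ lamstar i < 0) :=
    eq_zero_or_of_isMin_posL0ProxObjective hγ hC
      (le_apply_of_sum_le (fun i => posL0ProxObjective γ C (ustar i - γ * lamstar i)) hmin i)
  exact ⟨hcoord, fun i hi => ((hcoord i).resolve_left hi).1⟩
end

section
/- (Theorem 5: limit points of the ADMM iteration are P-stationary and locally optimal.) Let ρ₁, ρ₂, ρ₃ > 0 and C > 0. Suppose sequences (w^k)ₖ, (d^k)ₖ in ℝ^L with d^k having nonnegative components, (b^k)ₖ in ℝ, (u^k)ₖ, (z^k)ₖ, (θ^k)ₖ, (α^k)ₖ, (λ^k)ₖ satisfy, for every k ∈ ℕ: (i) with s^k = 1 − 𝒜(d^k)w^k − b^k y − λ^k/ρ₁ and T_k = {i : 0 < s^k_i < √(2C/ρ₁)}, u^{k+1}_i = 0 for i ∈ T_k and u^{k+1}_i = s^k_i for i ∉ T_k; (ii) 𝒦(d^k)w^{k+1}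 + 𝒜(d^k)ᵀλ^k + ρ₁𝒜(d^k)ᵀ(u^{k+1} + 𝒜(d^k)w^{k+1} + b^k y − 1) = 0; (iii) b^{k+1} = −yᵀ[λ^k + ρ₁(u^{k+1} + 𝒜(d^k)w^{k+1} − 1)]/(mρ₁); (iv) with S_k = {ℓ : d^k_ℓ + θ^k_ℓ/ρ₂ > 0}, z^{k+1}_ℓ = d^k_ℓ + θ^k_ℓ/ρ₂ for ℓ ∈ S_k and z^{k+1}_ℓ = 0 for ℓ ∉ S_k; (v) d^{k+1}_ℓ = 0 for ℓ ∉ S_k and, for every ℓ, (1/2)(w^{k+1})ᵀK_ℓ w^{k+1} + (λ^k)ᵀD_y K_ℓ w^{k+1} + ρ₁(D_y K_ℓ w^{k+1})ᵀ(u^{k+1} + b^{k+1}y − 1) + ρ₁(K_ℓ w^{k+1})ᵀ 𝒦(d^{k+1}) w^{k+1} + θ^k_ℓ + ρ₂(d^{k+1}_ℓ − z^{k+1}_ℓ) + α^k + ρ₃(1ᵀd^{k+1} − 1) = 0; (vi) θ^{k+1}_ℓ = θ^k_ℓ + ρ₂(d^{k+1}_ℓ − z^{k+1}_ℓ) for ℓ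 ∈ S_k and θ^{k+1}_ℓ = θ^k_ℓ for ℓ ∉ S_k; (vii) α^{k+1} = α^k + ρ₃(1ᵀd^{k+1} − 1); (viii) with r^{k+1} = u^{k+1} + 𝒜(d^{k+1})w^{k+1} + b^{k+1}y − 1, λ^{k+1}_i = λ^k_i + ρ₁ r^{k+1}_i for i ∈ T_k and λ^{k+1}_i = 0 for i ∉ T_k. If the sequence (w^k, d^k, b^k, u^k, z^k, θ^k, α^k, λ^k) converges to (w*, d*, b*, u*, z*, θ*, α*, λ*), then d* = z*, (w*, d*, b*, u*) is a P-stationary point with parameter γ = 1/ρ₁ and multipliers (−θ*, α*, λ*), and (w*, d*, b*, u*) is a local minimizer of the constrained problem: minimize (1/2)wᵀ𝒦(d)w + C‖u₊‖₀ over (w, d, b, u) subject to d ∈ Δ and u + 𝒜(d)w + by = 1. -/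
open Matrix

open Filter Topology

/-!
Passing to the limit in every update rule yields the P-stationarity conditions. For the
working-set updates one distinguishes whether an index lies in the working set infinitely often
(then the multiplier update forces the corresponding residual to vanish) or eventually never (then
the limit is a fixed point of the projection, resp. of the hard thresholding, which characterises
the proximal operator of `C‖·₊‖₀`).

Every P-stationary point is a local minimiser: the proximal condition forces `λ ≤ 0` and
`λᵢuᵢ = 0`, so `C‖u₊‖₀ ≤ C‖u'₊‖₀ + λᵀu'` for `u'` near `u`; and feasibility, `w = -D_y λ` and
stationarity in `d` (which makes `d` maximise `wᵀ𝒦(·)w` on the simplex) give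
`½wᵀ𝒦(d)w + λᵀu' ≤ ½w'ᵀ𝒦(d')w'` at every feasible point.
-/

section Limits

variable {ι : Type*} {l : Filter ι}

theorem Filter.Tendsto.matrix_mulVec {m n : Type*} [Fintype n] {M : ι → Matrix m n ℝ}
    {v : ι → n → ℝ} {M₀ : Matrix m n ℝ} {v₀ : n → ℝ} (hM : Tendsto M l (𝓝 M₀))
    (hv : Tendsto v l (𝓝 v₀)) : Tendsto (fun k => M k *ᵥ v k) l (𝓝 (M₀ *ᵥ v₀)) :=
  ((continuous_fst.matrix_mulVec continuous_snd).tendsto _).comp (hM.prodMk_nhds hv)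

theorem Filter.Tendsto.dotProduct {n : Type*} [Fintype n] {v w : ι → n → ℝ} {v₀ w₀ : n → ℝ}
    (hv : Tendsto v l (𝓝 v₀)) (hw : Tendsto w l (𝓝 w₀)) :
    Tendsto (fun k => v k ⬝ᵥ w k) l (𝓝 (v₀ ⬝ᵥ w₀)) :=
  ((continuous_fst.dotProduct continuous_snd).tendsto _).comp (hv.prodMk_nhds hw)

theorem Filter.Tendsto.matrix_transpose {m n : Type*} {M : ι → Matrix m n ℝ} {M₀ : Matrix m n ℝ}
    (hM : Tendsto M l (𝓝 M₀)) : Tendsto (fun k => (M k)ᵀ) l (𝓝 M₀ᵀ) :=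
  (continuous_id.matrix_transpose.tendsto _).comp hM

end Limits

theorem tendsto_sum_smul {L n : ℕ} (K : Fin L → Matrix (Fin n) (Fin n) ℝ) {d : ℕ → Fin L → ℝ}
    {d₀ : Fin L → ℝ} (hd : Tendsto d atTop (𝓝 d₀)) :
    Tendsto (fun k => ∑ ℓ, d k ℓ • K ℓ) atTop (𝓝 (∑ ℓ, d₀ ℓ • K ℓ)) :=
  tendsto_finsetSum _ fun ℓ _ => (tendsto_pi_nhds.1 hd ℓ).smul_const (K ℓ)

theorem eq_zero_of_frequently_multiplier_step {a e : ℕ → ℝ} {a₀ e₀ ρ : ℝ} (hρ : ρ ≠ 0)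
    (ha : Tendsto a atTop (𝓝 a₀)) (he : Tendsto e atTop (𝓝 e₀))
    (h : ∃ᶠ k in atTop, a (k + 1) = a k + ρ * e (k + 1)) : e₀ = 0 := by
  have := tendsto_nhds_unique_of_frequently_eq ((tendsto_add_atTop_iff_nat 1).2 ha)
    (ha.add (((tendsto_add_atTop_iff_nat 1).2 he).const_mul ρ)) h
  simpa [hρ] using this

theorem limit_of_projection_step {d z θ : ℕ → ℝ} {d₀ z₀ θ₀ ρ : ℝ} (hρ : 0 < ρ)
    (hd : Tendsto d atTop (𝓝 d₀)) (hz : Tendsto z atTop (𝓝 z₀)) (hθ : Tendsto θ atTop (𝓝 θ₀))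
    (hz_pos : ∀ k, 0 < d k + θ k / ρ → z (k + 1) = d k + θ k / ρ)
    (hz_nonpos : ∀ k, ¬(0 < d k + θ k / ρ) → z (k + 1) = 0)
    (hd_nonpos : ∀ k, ¬(0 < d k + θ k / ρ) → d (k + 1) = 0)
    (hθ_pos : ∀ k, 0 < d k + θ k / ρ → θ (k + 1) = θ k + ρ * (d (k + 1) - z (k + 1))) :
    d₀ = z₀ ∧ 0 ≤ -θ₀ ∧ -θ₀ * d₀ = 0 := by
  have hshift {f : ℕ → ℝ} {f₀ : ℝ} (hf : Tendsto f atTop (𝓝 f₀)) :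
      Tendsto (fun k => f (k + 1)) atTop (𝓝 f₀) := (tendsto_add_atTop_iff_nat 1).2 hf
  by_cases hS : ∃ᶠ k in atTop, 0 < d k + θ k / ρ
  · have hdz : d₀ - z₀ = 0 :=
      eq_zero_of_frequently_multiplier_step hρ.ne' hθ (hd.sub hz) (hS.mono hθ_pos)
    have hz₀ : z₀ = d₀ + θ₀ / ρ :=
      tendsto_nhds_unique_of_frequently_eq (hshift hz) (hd.add (hθ.div_const ρ)) (hS.mono hz_pos)
    have hθ₀ : θ₀ = 0 := by
      have : θ₀ / ρ = 0 := by linarith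
      simpa [hρ.ne'] using this
    exact ⟨by linarith, by simp [hθ₀], by simp [hθ₀]⟩
  · have hS' : ∀ᶠ k in atTop, ¬(0 < d k + θ k / ρ) := not_frequently.1 hS
    have hz₀ : z₀ = 0 :=
      tendsto_nhds_unique_of_eventuallyEq (hshift hz) tendsto_const_nhds (hS'.mono hz_nonpos)
    have hd₀ : d₀ = 0 :=
      tendsto_nhds_unique_of_eventuallyEq (hshift hd) tendsto_const_nhds (hS'.mono hd_nonpos)
    have hle : d₀ + θ₀ / ρ ≤ 0 :=
      le_of_tendsto (hd.add (hθ.div_const ρ)) (hS'.mono fun k hk => not_lt.1 hk)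
    have : θ₀ ≤ 0 := by simpa [hd₀] using (div_le_iff₀ hρ).1 (by linarith : θ₀ / ρ ≤ 0)
    exact ⟨by rw [hd₀, hz₀], by linarith, by simp [hd₀]⟩

/-- `u` is a hard thresholding of `a` at level `τ`; for `τ = √(2γC)` these are exactly the
minimisers of `t ↦ C·[t > 0] + (t - a)² / (2γ)`. -/
def IsHardThreshold (τ a u : ℝ) : Prop :=
  (u = 0 ∧ 0 ≤ a ∧ a ≤ τ) ∨ (u = a ∧ (a ≤ 0 ∨ τ ≤ a))

theorem limit_of_threshold_step {u lam s r : ℕ → ℝ} {u₀ lam₀ s₀ r₀ ρ τ : ℝ} (hρ : ρ ≠ 0)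
    (hu : Tendsto u atTop (𝓝 u₀)) (hlam : Tendsto lam atTop (𝓝 lam₀))
    (hs : Tendsto s atTop (𝓝 s₀)) (hr : Tendsto r atTop (𝓝 r₀))
    (hsr : s₀ = u₀ - r₀ - ρ⁻¹ * lam₀)
    (hu_in : ∀ k, (0 < s k ∧ s k < τ) → u (k + 1) = 0)
    (hu_out : ∀ k, ¬(0 < s k ∧ s k < τ) → u (k + 1) = s k)
    (hlam_in : ∀ k, (0 < s k ∧ s k < τ) → lam (k + 1) = lam k + ρ * r (k + 1))
    (hlam_out : ∀ k, ¬(0 < s k ∧ s k < τ) → lam (k + 1) = 0) :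
    r₀ = 0 ∧ IsHardThreshold τ s₀ u₀ := by
  have hu' : Tendsto (fun k => u (k + 1)) atTop (𝓝 u₀) := (tendsto_add_atTop_iff_nat 1).2 hu
  by_cases hT : ∃ᶠ k in atTop, 0 < s k ∧ s k < τ
  · refine ⟨eq_zero_of_frequently_multiplier_step hρ hlam hr (hT.mono hlam_in), Or.inl ⟨?_, ?_, ?_⟩⟩
    · exact tendsto_nhds_unique_of_frequently_eq hu' tendsto_const_nhds (hT.mono hu_in)
    · exact ge_of_tendsto_of_frequently hs (hT.mono fun k hk => hk.1.le)
    · exact le_of_tendsto_of_frequently hs (hT.mono fun k hk => hk.2.le)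
  · have hT' : ∀ᶠ k in atTop, ¬(0 < s k ∧ s k < τ) := not_frequently.1 hT
    have hlam₀ : lam₀ = 0 := tendsto_nhds_unique_of_eventuallyEq
      ((tendsto_add_atTop_iff_nat 1).2 hlam) tendsto_const_nhds (hT'.mono hlam_out)
    have hus : u₀ = s₀ := tendsto_nhds_unique_of_eventuallyEq hu' hs (hT'.mono hu_out)
    have hs₀ : s₀ ≤ 0 ∨ τ ≤ s₀ := by
      by_contra! h
      obtain ⟨k, hk, hk'⟩ := ((hs.eventually (Ioo_mem_nhds h.1 h.2)).and hT').exists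
      exact hk' hk
    refine ⟨?_, Or.inr ⟨hus, hs₀⟩⟩
    rw [hlam₀, mul_zero, sub_zero, ← hus] at hsr
    linarith

theorem limit_of_threshold_steps {m : ℕ} {y : Fin m → ℝ} {M : ℕ → Matrix (Fin m) (Fin m) ℝ}
    {w u lam s r : ℕ → Fin m → ℝ} {b : ℕ → ℝ} {M₀ : Matrix (Fin m) (Fin m) ℝ}
    {w₀ u₀ lam₀ : Fin m → ℝ} {b₀ ρ τ : ℝ} (hρ : ρ ≠ 0)
    (hM : Tendsto M atTop (𝓝 M₀)) (hw : Tendsto w atTop (𝓝 w₀)) (hb : Tendsto b atTop (𝓝 b₀))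
    (hu : Tendsto u atTop (𝓝 u₀)) (hlam : Tendsto lam atTop (𝓝 lam₀))
    (hs : ∀ k, s k = 1 - (diagonal y * M k) *ᵥ w k - b k • y - ρ⁻¹ • lam k)
    (hr : ∀ k, r k = u k + (diagonal y * M k) *ᵥ w k + b k • y - 1)
    (hu_in : ∀ k i, (0 < s k i ∧ s k i < τ) → u (k + 1) i = 0)
    (hu_out : ∀ k i, ¬(0 < s k i ∧ s k i < τ) → u (k + 1) i = s k i)
    (hlam_in : ∀ k i, (0 < s k i ∧ s k i < τ) → lam (k + 1) i = lam k i + ρ * r (k + 1) i)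
    (hlam_out : ∀ k i, ¬(0 < s k i ∧ s k i < τ) → lam (k + 1) i = 0) :
    u₀ + (diagonal y * M₀) *ᵥ w₀ + b₀ • y = 1 ∧
      ∀ i, IsHardThreshold τ (u₀ i - ρ⁻¹ * lam₀ i) (u₀ i) := by
  set s₀ := 1 - (diagonal y * M₀) *ᵥ w₀ - b₀ • y - ρ⁻¹ • lam₀
  set r₀ := u₀ + (diagonal y * M₀) *ᵥ w₀ + b₀ • y - 1
  have hAw := (tendsto_const_nhds.mul hM).matrix_mulVec hw (M := fun k => diagonal y * M k)
  have hs' : Tendsto s atTop (𝓝 s₀) :=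
    (((tendsto_const_nhds.sub hAw).sub (hb.smul_const y)).sub (hlam.const_smul ρ⁻¹)).congr
      fun k => (hs k).symm
  have hr' : Tendsto r atTop (𝓝 r₀) :=
    (((hu.add hAw).add (hb.smul_const y)).sub_const 1).congr fun k => (hr k).symm
  have hsr i : s₀ i = u₀ i - r₀ i - ρ⁻¹ * lam₀ i := by simp [s₀, r₀]; ring
  have hi i := limit_of_threshold_step hρ (tendsto_pi_nhds.1 hu i) (tendsto_pi_nhds.1 hlam i)
    (tendsto_pi_nhds.1 hs' i) (tendsto_pi_nhds.1 hr' i) (hsr i)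
    (hu_in · i) (hu_out · i) (hlam_in · i) (hlam_out · i)
  refine ⟨sub_eq_zero.1 (funext fun i => (hi i).1), fun i => ?_⟩
  simpa [hsr, (hi i).1] using (hi i).2

theorem Matrix.PosSemidef.transpose_eq_self {n : Type*} {M : Matrix n n ℝ} (hM : M.PosSemidef) :
    Mᵀ = M :=
  (isHermitian_iff_isSymm.1 hM.isHermitian).eq

theorem Matrix.posDef_sum_smul {ι n : Type*} [Fintype ι] [DecidableEq ι] {K : ι → Matrix n n ℝ}
    (hK : ∀ ℓ, (K ℓ).PosDef) {d : ι → ℝ} (hd : ∀ ℓ, 0 ≤ d ℓ) (hd_sum : 0 < ∑ ℓ, d ℓ) :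
    (∑ ℓ, d ℓ • K ℓ).PosDef := by
  obtain ⟨ℓ₀, hℓ₀⟩ : ∃ ℓ, 0 < d ℓ := by
    by_contra! h
    exact hd_sum.not_ge (Finset.sum_nonpos fun ℓ _ => h ℓ)
  rw [← Finset.add_sum_erase _ _ (Finset.mem_univ ℓ₀)]
  exact ((hK ℓ₀).smul hℓ₀).add_posSemidef
    (posSemidef_sum _ fun ℓ _ => (hK ℓ).posSemidef.smul (hd ℓ))

theorem Matrix.PosSemidef.two_mul_dotProduct_mulVec_sub_le {n : Type*} [Fintype n]
    {M : Matrix n n ℝ} (hM : M.PosSemidef) (a b : n → ℝ) :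
    2 * (a ⬝ᵥ M *ᵥ b) - a ⬝ᵥ M *ᵥ a ≤ b ⬝ᵥ M *ᵥ b := by
  have h := hM.dotProduct_mulVec_nonneg (b - a)
  have hsymm : b ⬝ᵥ M *ᵥ a = a ⬝ᵥ M *ᵥ b := by
    rw [dotProduct_mulVec, ← mulVec_transpose, hM.transpose_eq_self, dotProduct_comm]
  simp only [star_trivial, mulVec_sub, dotProduct_sub, sub_dotProduct, hsymm] at h
  linarith

theorem dotProduct_mulVec_eq_of_feasible {n : Type*} [Fintype n] [DecidableEq n]
    {y w lam w' u' : n → ℝ} {b' : ℝ} {M : Matrix n n ℝ}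
    (hwlam : w + diagonal y *ᵥ lam = 0) (hylam : y ⬝ᵥ lam = 0)
    (hfeas : u' + (diagonal y * M) *ᵥ w' + b' • y = 1) :
    w ⬝ᵥ M *ᵥ w' = lam ⬝ᵥ u' - lam ⬝ᵥ 1 := by
  have hw i : w i = -(y i * lam i) := by
    simpa [mulVec_diagonal, add_eq_zero_iff_eq_neg] using congrFun hwlam i
  have hf i : u' i + y i * (M *ᵥ w') i + b' * y i = 1 := by
    simpa [← mulVec_mulVec, mulVec_diagonal] using congrFun hfeas i
  calc w ⬝ᵥ M *ᵥ w' = ∑ i, (lam i * u' i - lam i * 1 + b' * (y i * lam i)) :=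
        Finset.sum_congr rfl fun i _ => by
          rw [hw i]; linear_combination (-lam i) * hf i
    _ = lam ⬝ᵥ u' - lam ⬝ᵥ 1 := by
      simp only [Finset.sum_add_distrib, Finset.sum_sub_distrib, ← Finset.mul_sum]
      simp only [dotProduct] at hylam ⊢
      simp [hylam]

theorem dotProduct_sum_smul_mulVec_le {ι n : Type*} [Fintype ι] [Fintype n]
    {K : ι → Matrix n n ℝ} {w : n → ℝ} {d d' θ : ι → ℝ} {α : ℝ}
    (hstat : ∀ ℓ, -(1 / 2) * (w ⬝ᵥ K ℓ *ᵥ w) + α - θ ℓ = 0) (hθ : ∀ ℓ, 0 ≤ θ ℓ)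
    (hθd : ∀ ℓ, θ ℓ * d ℓ = 0) (hd_sum : ∑ ℓ, d ℓ = 1)
    (hd' : ∀ ℓ, 0 ≤ d' ℓ) (hd'_sum : ∑ ℓ, d' ℓ = 1) :
    w ⬝ᵥ (∑ ℓ, d' ℓ • K ℓ) *ᵥ w ≤ w ⬝ᵥ (∑ ℓ, d ℓ • K ℓ) *ᵥ w := by
  have hq ℓ : w ⬝ᵥ K ℓ *ᵥ w = 2 * α - 2 * θ ℓ := by linarith [hstat ℓ]
  simp only [sum_mulVec, smul_mulVec, dotProduct_sum, dotProduct_smul, smul_eq_mul, hq]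
  calc ∑ ℓ, d' ℓ * (2 * α - 2 * θ ℓ) ≤ ∑ ℓ, d' ℓ * (2 * α) :=
        Finset.sum_le_sum fun ℓ _ => by nlinarith [hd' ℓ, hθ ℓ]
    _ = ∑ ℓ, d ℓ * (2 * α) := by rw [← Finset.sum_mul, ← Finset.sum_mul, hd_sum, hd'_sum]
    _ = ∑ ℓ, d ℓ * (2 * α - 2 * θ ℓ) :=
        Finset.sum_congr rfl fun ℓ _ => by linear_combination 2 * hθd ℓ

theorem dotProduct_diagonal_mulVec_eq_neg {n : Type*} [Fintype n] [DecidableEq n]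
    {y w lam : n → ℝ} (hwlam : w + diagonal y *ᵥ lam = 0) (v : n → ℝ) :
    lam ⬝ᵥ diagonal y *ᵥ v = -(w ⬝ᵥ v) := by
  simp only [dotProduct, mulVec_diagonal, ← Finset.sum_neg_distrib]
  refine Finset.sum_congr rfl fun i _ => ?_
  have := congrFun hwlam i
  simp only [Pi.add_apply, mulVec_diagonal, Pi.zero_apply] at this
  linear_combination v i * this

theorem diagonal_mulVec_dotProduct_eq_neg {n : Type*} [Fintype n] [DecidableEq n]
    {y w u : n → ℝ} {b : ℝ} {M : Matrix n n ℝ} (hy : ∀ i, y i * y i = 1)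
    (hfeas : u + (diagonal y * M) *ᵥ w + b • y = 1) (v : n → ℝ) :
    diagonal y *ᵥ v ⬝ᵥ (u + b • y - 1) = -(v ⬝ᵥ M *ᵥ w) := by
  simp only [dotProduct, mulVec_diagonal, ← Finset.sum_neg_distrib]
  refine Finset.sum_congr rfl fun i _ => ?_
  have := congrFun hfeas i
  simp only [Pi.add_apply, ← mulVec_mulVec, mulVec_diagonal, Pi.smul_apply, smul_eq_mul,
    Pi.one_apply] at this
  simp only [Pi.sub_apply, Pi.add_apply, Pi.smul_apply, smul_eq_mul, Pi.one_apply]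
  linear_combination (y i * v i) * this - (v i * (M *ᵥ w) i) * hy i

section ADMMLimits

variable {m : ℕ} {y : Fin m → ℝ} {M : ℕ → Matrix (Fin m) (Fin m) ℝ} {w u lam : ℕ → Fin m → ℝ}
  {b : ℕ → ℝ} {M₀ : Matrix (Fin m) (Fin m) ℝ} {w₀ u₀ lam₀ : Fin m → ℝ} {b₀ ρ : ℝ}

theorem add_diagonal_mulVec_eq_zero_of_tendsto (hM₀ : M₀.PosDef)
    (hM : Tendsto M atTop (𝓝 M₀)) (hw : Tendsto w atTop (𝓝 w₀)) (hb : Tendsto b atTop (𝓝 b₀))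
    (hu : Tendsto u atTop (𝓝 u₀)) (hlam : Tendsto lam atTop (𝓝 lam₀))
    (hfeas : u₀ + (diagonal y * M₀) *ᵥ w₀ + b₀ • y = 1)
    (h : ∀ k, M k *ᵥ w (k + 1) + (diagonal y * M k)ᵀ *ᵥ lam k +
      ρ • (diagonal y * M k)ᵀ *ᵥ (u (k + 1) + (diagonal y * M k) *ᵥ w (k + 1) + b k • y - 1) = 0) :
    w₀ + diagonal y *ᵥ lam₀ = 0 := by
  have hw' := (tendsto_add_atTop_iff_nat 1).2 hw
  have hA : Tendsto (fun k => diagonal y * M k) atTop (𝓝 (diagonal y * M₀)) :=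
    tendsto_const_nhds.mul hM
  have hlim := ((hM.matrix_mulVec hw').add (hA.matrix_transpose.matrix_mulVec hlam)).add
    ((hA.matrix_transpose.matrix_mulVec (((((tendsto_add_atTop_iff_nat 1).2 hu).add
      (hA.matrix_mulVec hw')).add (hb.smul_const y)).sub_const 1)).const_smul ρ)
  have h₀ := tendsto_nhds_unique_of_eventuallyEq hlim tendsto_const_nhds (Eventually.of_forall h)
  rw [sub_eq_zero.2 hfeas, mulVec_zero, smul_zero, add_zero, transpose_mul, diagonal_transpose,
    hM₀.posSemidef.transpose_eq_self, ← mulVec_mulVec, ← mulVec_add] at h₀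
  exact mulVec_injective_iff_isUnit.2 hM₀.isUnit (h₀.trans (mulVec_zero M₀).symm)

theorem dotProduct_eq_zero_of_tendsto (hy : ∀ i, y i * y i = 1) (hρ : ρ ≠ 0)
    (hM : Tendsto M atTop (𝓝 M₀)) (hw : Tendsto w atTop (𝓝 w₀)) (hb : Tendsto b atTop (𝓝 b₀))
    (hu : Tendsto u atTop (𝓝 u₀)) (hlam : Tendsto lam atTop (𝓝 lam₀))
    (hfeas : u₀ + (diagonal y * M₀) *ᵥ w₀ + b₀ • y = 1)
    (h : ∀ k, b (k + 1) =
      -(y ⬝ᵥ (lam k + ρ • (u (k + 1) + (diagonal y * M k) *ᵥ w (k + 1) - 1))) / (m * ρ)) :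
    y ⬝ᵥ lam₀ = 0 := by
  rcases Nat.eq_zero_or_pos m with rfl | hm
  · simp [dotProduct]
  have hA : Tendsto (fun k => diagonal y * M k) atTop (𝓝 (diagonal y * M₀)) :=
    tendsto_const_nhds.mul hM
  have hlim := ((tendsto_const_nhds (x := y)).dotProduct (hlam.add
    (((((tendsto_add_atTop_iff_nat 1).2 hu).add
      (hA.matrix_mulVec ((tendsto_add_atTop_iff_nat 1).2 hw))).sub_const 1).const_smul ρ))).neg
    |>.div_const ((m : ℝ) * ρ)
  have h₀ := tendsto_nhds_unique_of_eventuallyEq ((tendsto_add_atTop_iff_nat 1).2 hb) hlim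
    (Eventually.of_forall h)
  have hres : u₀ + (diagonal y * M₀) *ᵥ w₀ - 1 = -(b₀ • y) := by
    rw [← hfeas]; abel
  have hyy : y ⬝ᵥ y = m := by simp [dotProduct, hy]
  rw [hres, smul_neg, dotProduct_add, dotProduct_neg, dotProduct_smul, dotProduct_smul, hyy,
    smul_eq_mul, smul_eq_mul] at h₀
  field_simp at h₀
  linarith

end ADMMLimits

theorem stationarity_of_tendsto {m L : ℕ} {K : Fin L → Matrix (Fin m) (Fin m) ℝ}
    {y : Fin m → ℝ} {w u lam : ℕ → Fin m → ℝ} {d z θ : ℕ → Fin L → ℝ} {b α : ℕ → ℝ}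
    {w₀ u₀ lam₀ : Fin m → ℝ} {d₀ z₀ θ₀ : Fin L → ℝ} {b₀ α₀ ρ₁ ρ₂ ρ₃ : ℝ} (ℓ : Fin L)
    (hy : ∀ i, y i * y i = 1)
    (hw : Tendsto w atTop (𝓝 w₀)) (hu : Tendsto u atTop (𝓝 u₀))
    (hlam : Tendsto lam atTop (𝓝 lam₀)) (hd : Tendsto d atTop (𝓝 d₀))
    (hz : Tendsto z atTop (𝓝 z₀)) (hθ : Tendsto θ atTop (𝓝 θ₀)) (hb : Tendsto b atTop (𝓝 b₀))
    (hα : Tendsto α atTop (𝓝 α₀)) (hdz : d₀ ℓ = z₀ ℓ) (hd_sum : ∑ t, d₀ t = 1)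
    (hfeas : u₀ + (diagonal y * ∑ t, d₀ t • K t) *ᵥ w₀ + b₀ • y = 1)
    (hwlam : w₀ + diagonal y *ᵥ lam₀ = 0)
    (h : ∀ k, 1 / 2 * (w (k + 1) ⬝ᵥ K ℓ *ᵥ w (k + 1)) +
      lam k ⬝ᵥ (diagonal y * K ℓ) *ᵥ w (k + 1) +
      ρ₁ * ((diagonal y * K ℓ) *ᵥ w (k + 1) ⬝ᵥ (u (k + 1) + b (k + 1) • y - 1)) +
      ρ₁ * (K ℓ *ᵥ w (k + 1) ⬝ᵥ (∑ t, d (k + 1) t • K t) *ᵥ w (k + 1)) +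
      θ k ℓ + ρ₂ * (d (k + 1) ℓ - z (k + 1) ℓ) + α k + ρ₃ * (∑ t, d (k + 1) t - 1) = 0) :
    -(1 / 2) * (w₀ ⬝ᵥ K ℓ *ᵥ w₀) + α₀ - -θ₀ ℓ = 0 := by
  have hw' := (tendsto_add_atTop_iff_nat 1).2 hw
  have hu' := (tendsto_add_atTop_iff_nat 1).2 hu
  have hb' := (tendsto_add_atTop_iff_nat 1).2 hb
  have hd' := (tendsto_add_atTop_iff_nat 1).2 hd
  have hz' := (tendsto_add_atTop_iff_nat 1).2 hz
  have hKw := (tendsto_const_nhds (x := K ℓ)).matrix_mulVec hw'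
  have hDKw := (tendsto_const_nhds (x := diagonal y * K ℓ)).matrix_mulVec hw'
  have hlim := ((((((((hw'.dotProduct hKw).const_mul (1 / 2)).add (hlam.dotProduct hDKw)).add
    ((hDKw.dotProduct ((hu'.add (hb'.smul_const y)).sub_const 1)).const_mul ρ₁)).add
    ((hKw.dotProduct ((tendsto_sum_smul K hd').matrix_mulVec hw')).const_mul ρ₁)).add
    (tendsto_pi_nhds.1 hθ ℓ)).add
    (((tendsto_pi_nhds.1 hd' ℓ).sub (tendsto_pi_nhds.1 hz' ℓ)).const_mul ρ₂)).add hα).add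
    (((tendsto_finsetSum Finset.univ fun t _ => tendsto_pi_nhds.1 hd' t).sub_const 1).const_mul ρ₃)
  have h₀ := tendsto_nhds_unique_of_eventuallyEq hlim tendsto_const_nhds (Eventually.of_forall h)
  rw [← mulVec_mulVec, dotProduct_diagonal_mulVec_eq_neg hwlam,
    diagonal_mulVec_dotProduct_eq_neg hy hfeas, hdz, hd_sum] at h₀
  linarith

theorem mul_l0pos_eq_sum {m : ℕ} (C : ℝ) (v : Fin m → ℝ) :
    C * l0pos v = ∑ i, if 0 < v i then C else 0 := by
  rw [l0pos, ← Finset.sum_filter, Finset.sum_const, nsmul_eq_mul, mul_comm]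

theorem mul_l0pos_add_mul_sum_eq {m : ℕ} (C c : ℝ) (v a : Fin m → ℝ) :
    C * l0pos v + c * ∑ i, (v i - a i) ^ 2 =
      ∑ i, ((if 0 < v i then C else 0) + c * (v i - a i) ^ 2) := by
  rw [mul_l0pos_eq_sum, Finset.mul_sum, ← Finset.sum_add_distrib]

theorem le_of_forall_sum_le_sum_update {n : Type*} [Fintype n] [DecidableEq n]
    {g : n → ℝ → ℝ} {u : n → ℝ} (h : ∀ v : n → ℝ, ∑ i, g i (u i) ≤ ∑ i, g i (v i)) (i : n)
    (t : ℝ) : g i (u i) ≤ g i t := by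
  have := h (Function.update u i t)
  simp only [Function.apply_update g u i t, Finset.sum_update_of_mem (Finset.mem_univ i)] at this
  rw [← Finset.add_sum_erase _ _ (Finset.mem_univ i), ← Finset.sdiff_singleton_eq_erase] at this
  linarith

theorem add_sq_le_of_isHardThreshold {C γ τ a u : ℝ} (hC : 0 ≤ C) (hγ : 0 < γ)
    (hτ : τ ^ 2 = 2 * γ * C) (hτ₀ : 0 ≤ τ) (h : IsHardThreshold τ a u) (t : ℝ) :
    (if 0 < u then C else 0) + 1 / (2 * γ) * (u - a) ^ 2 ≤
      (if 0 < t then C else 0) + 1 / (2 * γ) * (t - a) ^ 2 := by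
  have hcτ : 1 / (2 * γ) * τ ^ 2 = C := by rw [hτ]; field_simp
  set c := 1 / (2 * γ)
  have hc : 0 < c := by positivity
  have hsq : 0 ≤ c * (t - a) ^ 2 := by positivity
  have hfar (ht : ¬0 < t) (ha : 0 ≤ a) : c * a ^ 2 ≤ c * (t - a) ^ 2 :=
    mul_le_mul_of_nonneg_left (by nlinarith [not_lt.1 ht]) hc.le
  rcases h with ⟨rfl, ha₀, haτ⟩ | ⟨rfl, ha | ha⟩
  · have : c * a ^ 2 ≤ C := hcτ ▸ by gcongr
    by_cases ht : 0 < t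
    · simp only [ht, lt_irrefl, if_true, if_false, zero_sub, neg_sq]; linarith
    · simpa [ht] using hfar ht ha₀
  · have hu : ¬0 < u := not_lt.2 ha
    simp only [hu, if_false, sub_self]
    split_ifs <;> linarith
  · have : C ≤ c * u ^ 2 := hcτ ▸ by gcongr
    have hu : 0 ≤ u := hτ₀.trans ha
    simp only [sub_self]
    by_cases ht : 0 < t
    · split_ifs <;> linarith
    · have := hfar ht hu
      split_ifs <;> linarith

theorem nonpos_and_mul_eq_zero_of_le {C γ u lam : ℝ} (hC : 0 ≤ C) (hγ : 0 < γ)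
    (h : ∀ t, (if 0 < u then C else 0) + 1 / (2 * γ) * (u - (u - γ * lam)) ^ 2 ≤
      (if 0 < t then C else 0) + 1 / (2 * γ) * (t - (u - γ * lam)) ^ 2) :
    lam ≤ 0 ∧ lam * u = 0 := by
  set c := 1 / (2 * γ)
  have hc : 0 < c := by positivity
  have hat := h (u - γ * lam)
  have hzero := h 0
  simp only [sub_sub_cancel, sub_self, zero_sub, lt_irrefl, if_false, neg_sq] at hat hzero
  have hpos (hl : lam ≠ 0) : 0 < c * (γ * lam) ^ 2 := by positivity
  have hnonpos : lam ≤ 0 := by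
    by_contra! hl
    have := hpos hl.ne'
    have := mul_pos hγ hl
    split_ifs at hat <;> nlinarith
  refine ⟨hnonpos, ?_⟩
  by_contra hne
  obtain ⟨hl, hu⟩ := mul_ne_zero_iff.1 hne
  have := hpos hl
  have hγl : γ * lam < 0 := mul_neg_of_pos_of_neg hγ (lt_of_le_of_ne hnonpos hl)
  split_ifs at hat hzero with hu₀ ha₀
  · nlinarith
  · nlinarith
  · have hu' : u < 0 := lt_of_le_of_ne (not_lt.1 hu₀) hu
    have := le_of_mul_le_mul_left (by linarith : c * (γ * lam) ^ 2 ≤ c * (u - γ * lam) ^ 2) hc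
    nlinarith
  · nlinarith

theorem eventually_le_add_mul {C lam u : ℝ} (hC : 0 < C) (hlam : lam ≤ 0) (hlamu : lam * u = 0) :
    ∀ᶠ t in 𝓝 u, (if 0 < u then C else 0) ≤ (if 0 < t then C else 0) + lam * t := by
  by_cases hu : u = 0
  · subst hu
    have : ∀ᶠ t in 𝓝 0, -C < lam * t :=
      ((continuous_const_mul lam).tendsto 0).eventually_const_lt (by simpa using hC)
    filter_upwards [this] with t ht
    split_ifs <;> nlinarith
  · have hlam0 : lam = 0 := (mul_eq_zero.1 hlamu).resolve_right hu
    subst hlam0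
    by_cases hu : 0 < u
    · filter_upwards [eventually_gt_nhds hu] with t ht
      simp [hu, ht]
    · exact Eventually.of_forall fun t => by split_ifs <;> linarith

theorem eventually_mul_l0pos_le {m : ℕ} {C : ℝ} {lam u : Fin m → ℝ} (hC : 0 < C)
    (hlam : ∀ i, lam i ≤ 0) (hlamu : ∀ i, lam i * u i = 0) :
    ∀ᶠ v in 𝓝 u, C * l0pos u ≤ C * l0pos v + lam ⬝ᵥ v := by
  filter_upwards [eventually_all.2 fun i => ((continuous_apply i).tendsto u).eventually
    (eventually_le_add_mul hC (hlam i) (hlamu i))] with v hv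
  rw [mul_l0pos_eq_sum, mul_l0pos_eq_sum, dotProduct, ← Finset.sum_add_distrib]
  exact Finset.sum_le_sum fun i _ => hv i

theorem prox_le_of_isHardThreshold {m : ℕ} {C γ τ : ℝ} {a u : Fin m → ℝ} (hC : 0 ≤ C)
    (hγ : 0 < γ) (hτ : τ ^ 2 = 2 * γ * C) (hτ₀ : 0 ≤ τ) (h : ∀ i, IsHardThreshold τ (a i) (u i))
    (v : Fin m → ℝ) :
    C * l0pos u + 1 / (2 * γ) * ∑ i, (u i - a i) ^ 2 ≤
      C * l0pos v + 1 / (2 * γ) * ∑ i, (v i - a i) ^ 2 := by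
  rw [mul_l0pos_add_mul_sum_eq, mul_l0pos_add_mul_sum_eq]
  exact Finset.sum_le_sum fun i _ => add_sq_le_of_isHardThreshold hC hγ hτ hτ₀ (h i) (v i)

namespace IsPStationaryWith

variable {m L : ℕ} {K : Fin L → Matrix (Fin m) (Fin m) ℝ} {y : Fin m → ℝ} {C γ : ℝ}
  {w : Fin m → ℝ} {d : Fin L → ℝ} {b : ℝ} {u : Fin m → ℝ} {θ : Fin L → ℝ} {α : ℝ}
  {lam : Fin m → ℝ}

theorem nonpos_and_mul_eq_zero (h : IsPStationaryWith K y C γ w d b u θ α lam) (hC : 0 ≤ C)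
    (hγ : 0 < γ) (i : Fin m) : lam i ≤ 0 ∧ lam i * u i = 0 := by
  refine nonpos_and_mul_eq_zero_of_le hC hγ fun t => le_of_forall_sum_le_sum_update
    (g := fun i t => (if 0 < t then C else 0) + 1 / (2 * γ) * (t - (u i - γ * lam i)) ^ 2)
    (fun v => ?_) i t
  simpa only [mul_l0pos_add_mul_sum_eq] using h.2.2.2.2.2.2.2.2 v

theorem half_dotProduct_add_le (hK : ∀ ℓ, (K ℓ).PosSemidef)
    (h : IsPStationaryWith K y C γ w d b u θ α lam) (hlamu : lam ⬝ᵥ u = 0)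
    {w' : Fin m → ℝ} {d' : Fin L → ℝ} {b' : ℝ} {u' : Fin m → ℝ} (hd' : ∀ ℓ, 0 ≤ d' ℓ)
    (hd'_sum : ∑ ℓ, d' ℓ = 1) (hfeas' : u' + (diagonal y * ∑ ℓ, d' ℓ • K ℓ) *ᵥ w' + b' • y = 1) :
    1 / 2 * (w ⬝ᵥ (∑ ℓ, d ℓ • K ℓ) *ᵥ w) + lam ⬝ᵥ u' ≤
      1 / 2 * (w' ⬝ᵥ (∑ ℓ, d' ℓ • K ℓ) *ᵥ w') := by
  obtain ⟨-, hd_sum, hθ, hθd, hfeas, hwlam, hstat, hylam, -⟩ := h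
  have hcross := dotProduct_mulVec_eq_of_feasible hwlam hylam hfeas'
  have hself := dotProduct_mulVec_eq_of_feasible hwlam hylam hfeas
  have hd := dotProduct_sum_smul_mulVec_le hstat hθ hθd hd_sum hd' hd'_sum
  have hpsd := (posSemidef_sum Finset.univ fun ℓ _ =>
    (hK ℓ).smul (hd' ℓ)).two_mul_dotProduct_mulVec_sub_le w w'
  linarith

theorem exists_local_min (hK : ∀ ℓ, (K ℓ).PosSemidef) (hC : 0 < C) (hγ : 0 < γ)
    (h : IsPStationaryWith K y C γ w d b u θ α lam) :
    ∃ δ > 0, ∀ (w' : Fin m → ℝ) (d' : Fin L → ℝ) (b' : ℝ) (u' : Fin m → ℝ),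
      ((∀ ℓ, 0 ≤ d' ℓ) ∧ ∑ ℓ, d' ℓ = 1 ∧ u' + (diagonal y * ∑ ℓ, d' ℓ • K ℓ) *ᵥ w' + b' • y = 1) →
      dist ((w', d', b', u') : (Fin m → ℝ) × (Fin L → ℝ) × ℝ × (Fin m → ℝ)) (w, d, b, u) < δ →
      1 / 2 * (w ⬝ᵥ (∑ ℓ, d ℓ • K ℓ) *ᵥ w) + C * l0pos u ≤
        1 / 2 * (w' ⬝ᵥ (∑ ℓ, d' ℓ • K ℓ) *ᵥ w') + C * l0pos u' := by
  have hlam i := h.nonpos_and_mul_eq_zero hC.le hγ i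
  have hlamu : lam ⬝ᵥ u = 0 := Finset.sum_eq_zero fun i _ => (hlam i).2
  obtain ⟨δ, hδ, hball⟩ := Metric.eventually_nhds_iff.1 <|
    (continuous_snd.snd.snd.tendsto (w, d, b, u)).eventually
      (eventually_mul_l0pos_le hC (fun i => (hlam i).1) fun i => (hlam i).2)
  refine ⟨δ, hδ, fun w' d' b' u' ⟨hd', hd'_sum, hfeas'⟩ hdist => ?_⟩
  linarith [hball hdist, h.half_dotProduct_add_le hK hlamu hd' hd'_sum hfeas']

end IsPStationaryWith

theorem stmt_16_general (m L : ℕ)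
    (y : Fin m → ℝ) (hy : ∀ i, y i = 1 ∨ y i = -1)
    (K : Fin L → Matrix (Fin m) (Fin m) ℝ) (hK : ∀ ℓ, (K ℓ).PosDef)
    (C : ℝ) (hC : 0 < C)
    (ρ₁ ρ₂ ρ₃ : ℝ) (hρ₁ : 0 < ρ₁) (hρ₂ : 0 < ρ₂) (hρ₃ : 0 < ρ₃)
    -- the ADMM iterates
    (w u lam : ℕ → Fin m → ℝ) (d z θ : ℕ → Fin L → ℝ) (b α : ℕ → ℝ)
    (hd_nonneg : ∀ k ℓ, 0 ≤ d k ℓ)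
    -- auxiliary quantities
    (s : ℕ → Fin m → ℝ)
    (hs : ∀ k, s k =
      1 - (Matrix.diagonal y * ∑ ℓ, d k ℓ • K ℓ).mulVec (w k) - b k • y - ρ₁⁻¹ • lam k)
    (r : ℕ → Fin m → ℝ)
    (hr : ∀ k, r k =
      u k + (Matrix.diagonal y * ∑ ℓ, d k ℓ • K ℓ).mulVec (w k) + b k • y - 1)
    -- (i) update of u via the working set T_k
    (hu : ∀ k i, (0 < s k i ∧ s k i < Real.sqrt (2 * C / ρ₁)) → u (k + 1) i = 0)
    (hu' : ∀ k i, ¬(0 < s k i ∧ s k i < Real.sqrt (2 * C / ρ₁)) → u (k + 1) i = s k i)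
    -- (ii) stationary-point equation for w
    (hw : ∀ k,
      (∑ ℓ, d k ℓ • K ℓ).mulVec (w (k + 1)) +
      (Matrix.diagonal y * ∑ ℓ, d k ℓ • K ℓ)ᵀ.mulVec (lam k) +
      ρ₁ • (Matrix.diagonal y * ∑ ℓ, d k ℓ • K ℓ)ᵀ.mulVec
        (u (k + 1) + (Matrix.diagonal y * ∑ ℓ, d k ℓ • K ℓ).mulVec (w (k + 1)) +
          b k • y - 1) = 0)
    -- (iii) update of b
    (hb : ∀ k, b (k + 1) =
      -(y ⬝ᵥ (lam k + ρ₁ • (u (k + 1) +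
          (Matrix.diagonal y * ∑ ℓ, d k ℓ • K ℓ).mulVec (w (k + 1)) - 1))) / (m * ρ₁))
    -- (iv) update of z via the working set S_k
    (hz : ∀ k ℓ, 0 < d k ℓ + θ k ℓ / ρ₂ → z (k + 1) ℓ = d k ℓ + θ k ℓ / ρ₂)
    (hz' : ∀ k ℓ, ¬(0 < d k ℓ + θ k ℓ / ρ₂) → z (k + 1) ℓ = 0)
    -- (v) update of d
    (hd0 : ∀ k ℓ, ¬(0 < d k ℓ + θ k ℓ / ρ₂) → d (k + 1) ℓ = 0)
    (hdeq : ∀ k ℓ,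
      (1 / 2) * (w (k + 1) ⬝ᵥ (K ℓ).mulVec (w (k + 1))) +
      (lam k ⬝ᵥ (Matrix.diagonal y * K ℓ).mulVec (w (k + 1))) +
      ρ₁ * ((Matrix.diagonal y * K ℓ).mulVec (w (k + 1)) ⬝ᵥ
        (u (k + 1) + b (k + 1) • y - 1)) +
      ρ₁ * ((K ℓ).mulVec (w (k + 1)) ⬝ᵥ
        (∑ t, d (k + 1) t • K t).mulVec (w (k + 1))) +
      θ k ℓ + ρ₂ * (d (k + 1) ℓ - z (k + 1) ℓ) + α k +
      ρ₃ * ((∑ t, d (k + 1) t) - 1) = 0)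
    -- (vi) update of θ
    (hθ : ∀ k ℓ, 0 < d k ℓ + θ k ℓ / ρ₂ →
      θ (k + 1) ℓ = θ k ℓ + ρ₂ * (d (k + 1) ℓ - z (k + 1) ℓ))
    -- (vii) update of α
    (hα : ∀ k, α (k + 1) = α k + ρ₃ * ((∑ ℓ, d (k + 1) ℓ) - 1))
    -- (viii) update of λ via the working set T_k
    (hlam : ∀ k i, (0 < s k i ∧ s k i < Real.sqrt (2 * C / ρ₁)) →
      lam (k + 1) i = lam k i + ρ₁ * r (k + 1) i)
    (hlam' : ∀ k i, ¬(0 < s k i ∧ s k i < Real.sqrt (2 * C / ρ₁)) →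
      lam (k + 1) i = 0)
    -- convergence of the iterates
    (wstar ustar lamstar : Fin m → ℝ) (dstar zstar θstar : Fin L → ℝ) (bstar αstar : ℝ)
    (hwlim : Tendsto w atTop (𝓝 wstar))
    (hdlim : Tendsto d atTop (𝓝 dstar))
    (hblim : Tendsto b atTop (𝓝 bstar))
    (hulim : Tendsto u atTop (𝓝 ustar))
    (hzlim : Tendsto z atTop (𝓝 zstar))
    (hθlim : Tendsto θ atTop (𝓝 θstar))
    (hαlim : Tendsto α atTop (𝓝 αstar))
    (hlamlim : Tendsto lam atTop (𝓝 lamstar)) :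
    dstar = zstar ∧
    IsPStationaryWith K y C (1 / ρ₁) wstar dstar bstar ustar
      (fun ℓ => -θstar ℓ) αstar lamstar ∧
    ∃ δ > 0, ∀ (w' : Fin m → ℝ) (d' : Fin L → ℝ) (b' : ℝ) (u' : Fin m → ℝ),
      ((∀ ℓ, 0 ≤ d' ℓ) ∧ (∑ ℓ, d' ℓ) = 1 ∧
        u' + (Matrix.diagonal y * ∑ ℓ, d' ℓ • K ℓ).mulVec w' + b' • y = 1) →
      dist ((w', d', b', u') : (Fin m → ℝ) × (Fin L → ℝ) × ℝ × (Fin m → ℝ))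
        (wstar, dstar, bstar, ustar) < δ →
      (1 / 2) * (wstar ⬝ᵥ (∑ ℓ, dstar ℓ • K ℓ).mulVec wstar) + C * l0pos ustar ≤
      (1 / 2) * (w' ⬝ᵥ (∑ ℓ, d' ℓ • K ℓ).mulVec w') + C * l0pos u' := by
  have hy2 i : y i * y i = 1 := by rcases hy i with h | h <;> simp [h]
  have hMlim := tendsto_sum_smul K hdlim
  have hd₀ ℓ : 0 ≤ dstar ℓ := ge_of_tendsto' (tendsto_pi_nhds.1 hdlim ℓ) (hd_nonneg · ℓ)
  have hsum : ∑ ℓ, dstar ℓ = 1 := sub_eq_zero.1 <|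
    eq_zero_of_frequently_multiplier_step hρ₃.ne' hαlim
      ((tendsto_finsetSum Finset.univ fun ℓ _ => tendsto_pi_nhds.1 hdlim ℓ).sub_const 1)
      (Frequently.of_forall hα)
  have hproj ℓ := limit_of_projection_step hρ₂ (tendsto_pi_nhds.1 hdlim ℓ)
    (tendsto_pi_nhds.1 hzlim ℓ) (tendsto_pi_nhds.1 hθlim ℓ) (hz · ℓ) (hz' · ℓ) (hd0 · ℓ) (hθ · ℓ)
  obtain ⟨hfeas, hthr⟩ :=
    limit_of_threshold_steps hρ₁.ne' hMlim hwlim hblim hulim hlamlim hs hr hu hu' hlam hlam'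
  have hwlam := add_diagonal_mulVec_eq_zero_of_tendsto
    (Matrix.posDef_sum_smul hK hd₀ (hsum ▸ one_pos)) hMlim hwlim hblim hulim hlamlim hfeas hw
  have hP : IsPStationaryWith K y C (1 / ρ₁) wstar dstar bstar ustar
      (fun ℓ => -θstar ℓ) αstar lamstar :=
    ⟨hd₀, hsum, fun ℓ => (hproj ℓ).2.1, fun ℓ => (hproj ℓ).2.2, hfeas, hwlam,
      fun ℓ => stationarity_of_tendsto ℓ hy2 hwlim hulim hlamlim hdlim hzlim hθlim hblim hαlim
        (hproj ℓ).1 hsum hfeas hwlam (hdeq · ℓ),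
      dotProduct_eq_zero_of_tendsto hy2 hρ₁.ne' hMlim hwlim hblim hulim hlamlim hfeas hb,
      prox_le_of_isHardThreshold (τ := √(2 * C / ρ₁)) hC.le (by positivity)
        (by rw [Real.sq_sqrt (by positivity)]; ring) (Real.sqrt_nonneg _)
        (by simpa only [one_div] using hthr)⟩
  exact ⟨funext fun ℓ => (hproj ℓ).1, hP,
    hP.exists_local_min (fun ℓ => (hK ℓ).posSemidef) hC (by positivity)⟩

/-- Theorem 5: if the ADMM iterates converge, the limit point is a P-stationary point
(with `γ = 1/ρ₁` and multipliers `(−θ*, α*, λ*)`) and a local minimizer of the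
constrained MKL-L₀/₁-SVM problem. -/
theorem stmt_16 (m L : ℕ) (hm : 1 ≤ m) (hL : 1 ≤ L)
    (y : Fin m → ℝ) (hy : ∀ i, y i = 1 ∨ y i = -1)
    (K : Fin L → Matrix (Fin m) (Fin m) ℝ) (hK : ∀ ℓ, (K ℓ).PosDef)
    (C : ℝ) (hC : 0 < C)
    (ρ₁ ρ₂ ρ₃ : ℝ) (hρ₁ : 0 < ρ₁) (hρ₂ : 0 < ρ₂) (hρ₃ : 0 < ρ₃)
    -- the ADMM iterates
    (w u lam : ℕ → Fin m → ℝ) (d z θ : ℕ → Fin L → ℝ) (b α : ℕ → ℝ)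
    (hd_nonneg : ∀ k ℓ, 0 ≤ d k ℓ)
    -- auxiliary quantities
    (s : ℕ → Fin m → ℝ)
    (hs : ∀ k, s k =
      1 - (Matrix.diagonal y * ∑ ℓ, d k ℓ • K ℓ).mulVec (w k) - b k • y - ρ₁⁻¹ • lam k)
    (r : ℕ → Fin m → ℝ)
    (hr : ∀ k, r k =
      u k + (Matrix.diagonal y * ∑ ℓ, d k ℓ • K ℓ).mulVec (w k) + b k • y - 1)
    -- (i) update of u via the working set T_k
    (hu : ∀ k i, (0 < s k i ∧ s k i < Real.sqrt (2 * C / ρ₁)) → u (k + 1) i = 0)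
    (hu' : ∀ k i, ¬(0 < s k i ∧ s k i < Real.sqrt (2 * C / ρ₁)) → u (k + 1) i = s k i)
    -- (ii) stationary-point equation for w
    (hw : ∀ k,
      (∑ ℓ, d k ℓ • K ℓ).mulVec (w (k + 1)) +
      (Matrix.diagonal y * ∑ ℓ, d k ℓ • K ℓ)ᵀ.mulVec (lam k) +
      ρ₁ • (Matrix.diagonal y * ∑ ℓ, d k ℓ • K ℓ)ᵀ.mulVec
        (u (k + 1) + (Matrix.diagonal y * ∑ ℓ, d k ℓ • K ℓ).mulVec (w (k + 1)) +
          b k • y - 1) = 0)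
    -- (iii) update of b
    (hb : ∀ k, b (k + 1) =
      -(y ⬝ᵥ (lam k + ρ₁ • (u (k + 1) +
          (Matrix.diagonal y * ∑ ℓ, d k ℓ • K ℓ).mulVec (w (k + 1)) - 1))) / (m * ρ₁))
    -- (iv) update of z via the working set S_k
    (hz : ∀ k ℓ, 0 < d k ℓ + θ k ℓ / ρ₂ → z (k + 1) ℓ = d k ℓ + θ k ℓ / ρ₂)
    (hz' : ∀ k ℓ, ¬(0 < d k ℓ + θ k ℓ / ρ₂) → z (k + 1) ℓ = 0)
    -- (v) update of d
    (hd0 : ∀ k ℓ, ¬(0 < d k ℓ + θ k ℓ / ρ₂) → d (k + 1) ℓ = 0)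
    (hdeq : ∀ k ℓ,
      (1 / 2) * (w (k + 1) ⬝ᵥ (K ℓ).mulVec (w (k + 1))) +
      (lam k ⬝ᵥ (Matrix.diagonal y * K ℓ).mulVec (w (k + 1))) +
      ρ₁ * ((Matrix.diagonal y * K ℓ).mulVec (w (k + 1)) ⬝ᵥ
        (u (k + 1) + b (k + 1) • y - 1)) +
      ρ₁ * ((K ℓ).mulVec (w (k + 1)) ⬝ᵥ
        (∑ t, d (k + 1) t • K t).mulVec (w (k + 1))) +
      θ k ℓ + ρ₂ * (d (k + 1) ℓ - z (k + 1) ℓ) + α k +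
      ρ₃ * ((∑ t, d (k + 1) t) - 1) = 0)
    -- (vi) update of θ
    (hθ : ∀ k ℓ, 0 < d k ℓ + θ k ℓ / ρ₂ →
      θ (k + 1) ℓ = θ k ℓ + ρ₂ * (d (k + 1) ℓ - z (k + 1) ℓ))
    (hθ' : ∀ k ℓ, ¬(0 < d k ℓ + θ k ℓ / ρ₂) → θ (k + 1) ℓ = θ k ℓ)
    -- (vii) update of α
    (hα : ∀ k, α (k + 1) = α k + ρ₃ * ((∑ ℓ, d (k + 1) ℓ) - 1))
    -- (viii) update of λ via the working set T_k
    (hlam : ∀ k i, (0 < s k i ∧ s k i < Real.sqrt (2 * C / ρ₁)) →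
      lam (k + 1) i = lam k i + ρ₁ * r (k + 1) i)
    (hlam' : ∀ k i, ¬(0 < s k i ∧ s k i < Real.sqrt (2 * C / ρ₁)) →
      lam (k + 1) i = 0)
    -- convergence of the iterates
    (wstar ustar lamstar : Fin m → ℝ) (dstar zstar θstar : Fin L → ℝ) (bstar αstar : ℝ)
    (hwlim : Tendsto w atTop (𝓝 wstar))
    (hdlim : Tendsto d atTop (𝓝 dstar))
    (hblim : Tendsto b atTop (𝓝 bstar))
    (hulim : Tendsto u atTop (𝓝 ustar))
    (hzlim : Tendsto z atTop (𝓝 zstar))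
    (hθlim : Tendsto θ atTop (𝓝 θstar))
    (hαlim : Tendsto α atTop (𝓝 αstar))
    (hlamlim : Tendsto lam atTop (𝓝 lamstar)) :
    dstar = zstar ∧
    IsPStationaryWith K y C (1 / ρ₁) wstar dstar bstar ustar
      (fun ℓ => -θstar ℓ) αstar lamstar ∧
    ∃ δ > 0, ∀ (w' : Fin m → ℝ) (d' : Fin L → ℝ) (b' : ℝ) (u' : Fin m → ℝ),
      ((∀ ℓ, 0 ≤ d' ℓ) ∧ (∑ ℓ, d' ℓ) = 1 ∧
        u' + (Matrix.diagonal y * ∑ ℓ, d' ℓ • K ℓ).mulVec w' + b' • y = 1) →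
      dist ((w', d', b', u') : (Fin m → ℝ) × (Fin L → ℝ) × ℝ × (Fin m → ℝ))
        (wstar, dstar, bstar, ustar) < δ →
      (1 / 2) * (wstar ⬝ᵥ (∑ ℓ, dstar ℓ • K ℓ).mulVec wstar) + C * l0pos ustar ≤
      (1 / 2) * (w' ⬝ᵥ (∑ ℓ, d' ℓ • K ℓ).mulVec w') + C * l0pos u' :=
  stmt_16_general m L y hy K hK C hC ρ₁ ρ₂ ρ₃ hρ₁ hρ₂ hρ₃ w u lam d z θ b α hd_nonneg s hs r hr hu
    hu' hw hb hz hz' hd0 hdeq hθ hα hlam hlam' wstar ustar lamstar dstar zstar θstar bstar αstar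
    hwlim hdlim hblim hulim hzlim hθlim hαlim hlamlim
end
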